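/- arXiv:2512.17683 — 7 statements merged into one kernel-verified Lean document; each statement's English description precedes it below -/
import Mathlib

section
/- Let a, b, c be three pairwise distinct letters and let u = abcacbc. For every integer n ≥ 6, the following sequence over the alphabet {1,…,n} is u-saturated: the blocks 1,2,k for k = n, n−1, …, 3 (in decreasing order of k), followed by the block 1,2,3 once more, followed by 1,2, followed by the decreasing run n, n−1, …, 5, 4, followed by the increasing run 6, 7, …, n. -/
/-- `v` is a *copy* of `u`: it is obtained from `u` by an injective renaming of letters. -/
def IsCopy {α β : Type*} (v : List β) (u : List α) : Prop :=
  ∃ f : α → β, (∀ x ∈ u, ∀ y ∈ u, f x = f y → x = y) ∧ v = u.map f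

/-- `s` contains a copy of `u` as a (not necessarily contiguous) subsequence. -/
def ContainsCopy {α β : Type*} (s : List β) (u : List α) : Prop :=
  ∃ v : List β, v.Sublist s ∧ IsCopy v u

/-- `s` is `r`-sparse: any `r` consecutive letters of `s` are pairwise distinct. -/
def Sparse {A : Type*} (r : ℕ) (s : List A) : Prop :=
  ∀ (i j : ℕ) (hij : i < j) (hj : j < s.length), j < i + r →
    s.get ⟨i, hij.trans hj⟩ ≠ s.get ⟨j, hj⟩

/-- `s` is a `u`-saturated sequence over the alphabet `alphabet`:
`s` uses letters from `alphabet`, is `r`-sparse (where `r` is the number of distinct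
letters of `u`), avoids `u`, and inserting any letter of `alphabet` at any position
violates `r`-sparsity or creates a copy of `u`. -/
def Saturated {α A : Type*} [DecidableEq α] (u : List α) (s : List A) (alphabet : Set A) : Prop :=
  Sparse u.toFinset.card s ∧ ¬ ContainsCopy s u ∧ (∀ x ∈ s, x ∈ alphabet) ∧
  ∀ x ∈ alphabet, ∀ i ≤ s.length,
    ¬ Sparse u.toFinset.card (s.insertIdx i x) ∨ ContainsCopy (s.insertIdx i x) u

/-- The explicit candidate saturated sequence for `u = abcacbc` over the alphabet `{1,…,n}`:
blocks `1,2,k` for `k = n, n-1, …, 3`, then `1,2,3` once more, then `1,2`,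
then the decreasing run `n, n-1, …, 5, 4`, then the increasing run `6, 7, …, n`. -/
def abcacbcSeq (n : ℕ) : List ℕ :=
  ((List.range (n - 2)).flatMap (fun i => [1, 2, n - i])) ++
    [1, 2, 3] ++ [1, 2] ++
    ((List.range (n - 3)).map (fun i => n - i)) ++
    ((List.range (n - 5)).map (fun i => 6 + i))

/-!
Encode the sequence by its letter at each position (`seqVal`); every claim then becomes
linear arithmetic on positions. In a copy of `abcacbc` the letter playing `c` occurs three
times, and the letters occurring three times are `1`, `2` and `6, …, n`. If `c ∈ {1, 2}` the
copy lies before the decreasing run, where the only repeated letter `≥ 3` is `3`, and its two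
occurrences are too close to each other and to the end of that prefix. If `c ≥ 6` its three
occurrences are those in its block and in the two runs, and `b` would have to occur both
outside and inside the interval `[4, c)`.

For saturation, inserting `x` either puts it within distance `2` of an existing `x`, or an
explicit copy through the new `x` can be read off, for instance `x 1 2 x 2 1 2` in front of
the block of `x`, `1 2 x 1 x 2 x` just after it, `1 v x 1 x v x` in front of a letter `v > x`
of the decreasing run, and `(x-1) w x (x-1) x w x` in front of a letter `w < x - 1` of either
run.
-/

open List

section Generic
variable {α β : Type*}

theorem sparse_map_range_iff {r L : ℕ} {g : ℕ → β} :
    Sparse r ((range L).map g) ↔ ∀ i j, i < j → j < L → j < i + r → g i ≠ g j := by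
  simp [Sparse]

theorem not_sparse_insertIdx {r i j : ℕ} {s : List β} {x : β} (hi : i ≤ s.length)
    (hj : j < s.length) (hx : s[j] = x) (hji : j + 1 < i + r) (hij : i < j + r) :
    ¬ Sparse r (s.insertIdx i x) := by
  intro hs
  have hlen := length_insertIdx_of_le_length hi x
  rcases le_or_gt i j with h | h
  · refine hs i (j + 1) (by omega) (by omega) (by omega) ?_
    simp [getElem_insertIdx_of_gt (Nat.lt_succ_of_le h), hx]
  · refine hs j i h (by omega) (by omega) ?_
    simp [getElem_insertIdx_of_lt h, hx]

theorem not_sparse_insertIdx_map_range {r L i j : ℕ} {g : ℕ → β} {x : β} (hi : i ≤ L)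
    (hj : j < L) (hx : g j = x) (hji : j + 1 < i + r) (hij : i < j + r) :
    ¬ Sparse r (((range L).map g).insertIdx i x) :=
  not_sparse_insertIdx (by simpa) (by simpa) (by simpa) hji hij

theorem insertIdx_eq_take_append_drop {l : List α} {i : ℕ} (x : α) (hi : i ≤ l.length) :
    l.insertIdx i x = l.take i ++ x :: l.drop i := by
  obtain ⟨l₁, l₂, rfl, rfl, h⟩ := exists_of_modifyTailIdx (cons x) hi
  rw [take_left, drop_left]
  exact h

theorem sublist_range'_of_pairwise {js : List ℕ} {a k : ℕ} (hjs : js.Pairwise (· < ·))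
    (h : ∀ j ∈ js, a ≤ j ∧ j < a + k) : js <+ range' a k :=
  sublist_of_subperm_of_pairwise (subperm_of_subset hjs.nodup fun j hj => by simpa using h j hj)
    (hjs.imp le_of_lt) ((pairwise_lt_range' (s := a) (n := k)).imp le_of_lt)

theorem map_append_cons_sublist_insertIdx {g : ℕ → β} {L i : ℕ} (x : β) (hi : i ≤ L)
    {js ks : List ℕ} (hjs : (js ++ ks).Pairwise (· < ·)) (hj : ∀ j ∈ js, j < i)
    (hk : ∀ k ∈ ks, i ≤ k ∧ k < L) :
    js.map g ++ x :: ks.map g <+ ((range L).map g).insertIdx i x := by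
  rw [pairwise_append] at hjs
  rw [insertIdx_eq_take_append_drop x (by simpa), ← map_take, ← map_drop, take_range,
    range_eq_range', range_eq_range', drop_range']
  refine ((sublist_range'_of_pairwise hjs.1 fun j hj' => ?_).map g).append
    (((sublist_range'_of_pairwise hjs.2.1 fun k hk' => ?_).map g).cons_cons x)
  · have := hj j hj'; omega
  · have := hk k hk'; omega

def ContainsAbcacbc (s : List β) : Prop :=
  ∃ p q r, p ≠ q ∧ p ≠ r ∧ q ≠ r ∧ [p, q, r, p, r, q, r] <+ s

theorem containsCopy_abcacbc_iff {a b c : α} (hab : a ≠ b) (hac : a ≠ c) (hbc : b ≠ c)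
    {s : List β} : ContainsCopy s [a, b, c, a, c, b, c] ↔ ContainsAbcacbc s := by
  constructor
  · rintro ⟨v, hv, f, hf, rfl⟩
    exact ⟨f a, f b, f c, fun h => hab (hf _ (by simp) _ (by simp) h),
      fun h => hac (hf _ (by simp) _ (by simp) h), fun h => hbc (hf _ (by simp) _ (by simp) h), hv⟩
  · rintro ⟨p, q, r, hpq, hpr, hqr, hs⟩
    classical
    refine ⟨_, hs, fun y => if y = a then p else if y = b then q else r, ?_, ?_⟩
    · have habc : ∀ y ∈ [a, b, c, a, c, b, c], y = a ∨ y = b ∨ y = c := by simp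
      intro y hy z hz h
      rcases habc y hy with rfl | rfl | rfl <;> rcases habc z hz with rfl | rfl | rfl <;>
        simp_all [eq_comm]
    · simp [hab.symm, hac.symm, hbc.symm]

theorem containsAbcacbc_insertIdx_map_range {g : ℕ → β} {L i : ℕ} {x : β} (hi : i ≤ L)
    (js ks : List ℕ) (p q r : β)
    (hpos : (js ++ ks).Pairwise (· < ·) ∧ (∀ j ∈ js, j < i) ∧ ∀ k ∈ ks, i ≤ k ∧ k < L)
    (hpqr : p ≠ q ∧ p ≠ r ∧ q ≠ r) (hpat : js.map g ++ x :: ks.map g = [p, q, r, p, r, q, r]) :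
    ContainsAbcacbc (((range L).map g).insertIdx i x) :=
  ⟨p, q, r, hpqr.1, hpqr.2.1, hpqr.2.2,
    hpat ▸ map_append_cons_sublist_insertIdx x hi hpos.1 hpos.2.1 hpos.2.2⟩

end Generic

/-- The letter at position `j` of `abcacbcSeq n` (see `abcacbcSeq_eq_map_range`): the block
`1, 2, k` sits at `3 (n - k)`, `3 (n - k) + 1`, `3 (n - k) + 2` (the repeated block `1, 2, 3` is
the case `k = 2`, whence the `max`), the final `1, 2` at `3n - 3`, `3n - 2`, the letter `v` of the
decreasing run at `4n - 1 - v` and the letter `w` of the increasing run at `4n - 10 + w`. -/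
def seqVal (n j : ℕ) : ℕ :=
  if j + 1 < 3 * n then
    if j % 3 = 0 then 1 else if j % 3 = 1 then 2 else max (n - j / 3) 3
  else if j + 4 < 4 * n then 4 * n - 1 - j
  else j + 10 - 4 * n

theorem seqVal_cases (n j : ℕ) :
    (j + 1 < 3 * n ∧ j % 3 = 0 ∧ seqVal n j = 1) ∨
    (j + 1 < 3 * n ∧ j % 3 = 1 ∧ seqVal n j = 2) ∨
    (j + 6 < 3 * n ∧ j % 3 = 2 ∧ seqVal n j + j / 3 = n) ∨
    (j + 4 = 3 * n ∧ seqVal n j = 3) ∨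
    (3 * n ≤ j + 1 ∧ j + 4 < 4 * n ∧ seqVal n j + j + 1 = 4 * n) ∨
    (4 * n ≤ j + 4 ∧ seqVal n j + 4 * n = j + 10) := by
  unfold seqVal
  split_ifs with h₁ h₂ h₃ h₄
  · exact .inl ⟨h₁, h₂, rfl⟩
  · exact .inr <| .inl ⟨h₁, by omega, rfl⟩
  · rcases lt_or_ge (j + 6) (3 * n) with h | h
    · exact .inr <| .inr <| .inl ⟨h, by omega, by omega⟩
    · exact .inr <| .inr <| .inr <| .inl ⟨by omega, by omega⟩
  · exact .inr <| .inr <| .inr <| .inr <| .inl ⟨by omega, h₄, by omega⟩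
  · exact .inr <| .inr <| .inr <| .inr <| .inr ⟨by omega, by omega⟩

section seqVal
variable {n j : ℕ}

@[simp]
theorem seqVal_eq_one_iff (hn : 2 ≤ n) : seqVal n j = 1 ↔ j + 1 < 3 * n ∧ j % 3 = 0 := by
  rcases seqVal_cases n j with h | h | h | h | h | h <;> omega

@[simp]
theorem seqVal_eq_two_iff (hn : 3 ≤ n) : seqVal n j = 2 ↔ j + 1 < 3 * n ∧ j % 3 = 1 := by
  rcases seqVal_cases n j with h | h | h | h | h | h <;> omega

@[simp]
theorem seqVal_eq_iff_of_three_le {v : ℕ} (hv : 3 ≤ v) (hj : j + 9 < 5 * n) :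
    seqVal n j = v ↔ (v ≤ n ∧ j = 3 * (n - v) + 2) ∨ (v = 3 ∧ j + 4 = 3 * n) ∨
      (4 ≤ v ∧ v ≤ n ∧ j + v + 1 = 4 * n) ∨ (6 ≤ v ∧ v ≤ n ∧ j + 10 = 4 * n + v) := by
  rcases seqVal_cases n j with h | h | h | h | h | h <;> omega

theorem seqVal_mem_Icc (hj : j + 9 < 5 * n) : seqVal n j ∈ Set.Icc 1 n := by
  rcases seqVal_cases n j with h | h | h | h | h | h <;> simp only [Set.mem_Icc] <;> omega

theorem seqVal_le_two_or_of_seqVal_eq {j' : ℕ} (hjj' : j < j') (hj' : j' + 1 < 3 * n)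
    (h : seqVal n j = seqVal n j') : seqVal n j ≤ 2 ∨ (j + 7 = 3 * n ∧ j' + 4 = 3 * n) := by
  rcases seqVal_cases n j with h₁ | h₁ | h₁ | h₁ | h₁ | h₁ <;>
    rcases seqVal_cases n j' with h₂ | h₂ | h₂ | h₂ | h₂ | h₂ <;> omega

theorem eq_of_seqVal_eq_of_three_le {j₁ j₂ j₃ v : ℕ} (hv : 3 ≤ v) (h₁₂ : j₁ < j₂)
    (h₂₃ : j₂ < j₃) (hj₃ : j₃ + 9 < 5 * n) (h₁ : seqVal n j₁ = v) (h₂ : seqVal n j₂ = v)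
    (h₃ : seqVal n j₃ = v) :
    6 ≤ v ∧ j₁ = 3 * (n - v) + 2 ∧ j₂ + v + 1 = 4 * n ∧ j₃ + 10 = 4 * n + v := by
  rw [seqVal_eq_iff_of_three_le hv (by omega)] at h₁ h₂ h₃
  omega

theorem map_range_seqVal_eq_flatMap {m : ℕ} (hm : m + 2 ≤ n) :
    (range (3 * m)).map (seqVal n) = (range m).flatMap (fun t => [1, 2, n - t]) := by
  induction m with
  | zero => rfl
  | succ m ih =>
    rw [range_succ, flatMap_append, ← ih (by omega), show 3 * (m + 1) = 3 * m + 3 by ring,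
      range_add, map_append, map_map]
    simp (disch := omega) [range_succ]
    omega

theorem abcacbcSeq_eq_map_range (hn : 6 ≤ n) :
    abcacbcSeq n = (range (5 * n - 9)).map (seqVal n) := by
  rw [show 5 * n - 9 = 3 * (n - 2) + 3 + 2 + (n - 3) + (n - 5) by omega]
  simp only [range_add, map_append, map_map, abcacbcSeq,
    map_range_seqVal_eq_flatMap (by omega : n - 2 + 2 ≤ n)]
  refine .symm (congr_arg₂ _ (congr_arg₂ _ ?_ (map_congr_left fun t ht => ?_))
    (map_congr_left fun t ht => ?_))
  · simp (disch := omega) [range_succ]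
    omega
  all_goals
    rw [mem_range] at ht
    simp (disch := omega)
    omega

end seqVal

section abcacbcSeq
variable {n : ℕ}

theorem length_abcacbcSeq (hn : 6 ≤ n) : (abcacbcSeq n).length = 5 * n - 9 := by
  simp [abcacbcSeq_eq_map_range hn]

theorem mem_Icc_of_mem_abcacbcSeq (hn : 6 ≤ n) : ∀ x ∈ abcacbcSeq n, x ∈ Set.Icc 1 n := by
  simp only [abcacbcSeq_eq_map_range hn, mem_map, mem_range]
  rintro _ ⟨j, hj, rfl⟩
  exact seqVal_mem_Icc (by omega)

theorem sparse_abcacbcSeq (hn : 6 ≤ n) : Sparse 3 (abcacbcSeq n) := by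
  rw [abcacbcSeq_eq_map_range hn, sparse_map_range_iff]
  intro i j hij _ hji
  rcases seqVal_cases n i with h | h | h | h | h | h <;>
    rcases seqVal_cases n j with h' | h' | h' | h' | h' | h' <;> omega

theorem not_containsAbcacbc_abcacbcSeq (hn : 6 ≤ n) : ¬ ContainsAbcacbc (abcacbcSeq n) := by
  rw [abcacbcSeq_eq_map_range hn]
  rintro ⟨p, q, r, hpq, hpr, hqr, hsub⟩
  obtain ⟨js, hjs, hmap⟩ := sublist_map_iff.1 hsub
  have hsorted := pairwise_lt_range.sublist hjs
  have hlt : ∀ j ∈ js, j < 5 * n - 9 := fun j h => mem_range.1 (hjs.subset h)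
  simp only [eq_comm (a := [p, q, r, p, r, q, r]), map_eq_cons_iff, map_eq_nil_iff] at hmap
  obtain ⟨j₁, _, rfl, h₁, j₂, _, rfl, h₂, j₃, _, rfl, h₃, j₄, _, rfl, h₄, j₅, _, rfl, h₅,
    j₆, _, rfl, h₆, j₇, _, rfl, h₇, rfl⟩ := hmap
  simp only [pairwise_cons, mem_cons, forall_eq_or_imp] at hsorted hlt
  rcases le_or_gt r 2 with hr | hr
  · -- the copy lies before position `3n - 1`, so `p` or `q` is `3`, whose occurrences there,
    -- `3n - 7` and `3n - 4`, leave too little room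
    have h₇' : j₇ + 1 < 3 * n := by
      rcases seqVal_cases n j₇ with h | h | h | h | h | h <;> omega
    have hp := seqVal_le_two_or_of_seqVal_eq (by omega) (by omega) (h₁.trans h₄.symm)
    have hq := seqVal_le_two_or_of_seqVal_eq (by omega) (by omega) (h₂.trans h₆.symm)
    have hp₁ := (seqVal_mem_Icc (n := n) (j := j₁) (by omega)).1
    have hq₁ := (seqVal_mem_Icc (n := n) (j := j₂) (by omega)).1
    have hr₁ := (seqVal_mem_Icc (n := n) (j := j₃) (by omega)).1
    omega
  · obtain ⟨hr6, e₃, e₅, e₇⟩ :=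
      eq_of_seqVal_eq_of_three_le (by omega) (by omega) (by omega) (by omega) h₃ h₅ h₇
    -- `q` occurs before the block of `r` (so `q ≤ 2` or `r < q`) and between the occurrences
    -- of `r` in the two runs (so `4 ≤ q < r`)
    rcases seqVal_cases n j₂ with h | h | h | h | h | h <;>
      rcases seqVal_cases n j₆ with h' | h' | h' | h' | h' | h' <;> omega

def InsertionBlocked (s : List ℕ) (i x : ℕ) : Prop :=
  ¬ Sparse 3 (s.insertIdx i x) ∨ ContainsAbcacbc (s.insertIdx i x)

theorem insertionBlocked_of_le_two {i x : ℕ} (hn : 6 ≤ n) (hx : x = 1 ∨ x = 2)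
    (hi : i ≤ 5 * n - 9) : InsertionBlocked (abcacbcSeq n) i x := by
  rw [InsertionBlocked, abcacbcSeq_eq_map_range hn]
  rcases le_or_gt i (3 * n - 1) with hi' | hi'
  · left
    rcases hx with rfl | rfl
    · exact not_sparse_insertIdx_map_range (j := 3 * min ((i + 1) / 3) (n - 1)) hi (by omega)
        (by simp (disch := omega); omega) (by omega) (by omega)
    · exact not_sparse_insertIdx_map_range (j := 3 * (i / 3) + 1) hi (by omega)
        (by simp (disch := omega); omega) (by omega) (by omega)
  · right
    rcases hx with rfl | rfl
    · exact containsAbcacbc_insertIdx_map_range hi [1, 2, 3, 4, 6, 3 * n - 1] [] 2 n 1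
        (by simp; omega) (by omega) (by simp (disch := omega); omega)
    · exact containsAbcacbc_insertIdx_map_range hi [0, 2, 4, 6, 7, 3 * n - 1] [] 1 n 2
        (by simp; omega) (by omega) (by simp (disch := omega); omega)

theorem insertionBlocked_up_to_block {i x : ℕ} (hn : 6 ≤ n) (hx : 3 ≤ x) (hxn : x ≤ n)
    (hi : i ≤ 3 * (n - x) + 4) : InsertionBlocked (abcacbcSeq n) i x := by
  rw [InsertionBlocked, abcacbcSeq_eq_map_range hn]
  rcases le_or_gt i (3 * (n - x)) with hi' | hi'
  · refine .inr <| containsAbcacbc_insertIdx_map_range (by omega) []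
      [3 * (n - x), 3 * (n - x) + 1, 3 * (n - x) + 2, 3 * n - 5, 3 * n - 3, 3 * n - 2] x 1 2
      (by simp; omega) (by omega) (by simp (disch := omega); omega)
  · exact .inl <| not_sparse_insertIdx_map_range (j := 3 * (n - x) + 2) (by omega) (by omega)
      (by simp (disch := omega); omega) (by omega) (by omega)

theorem insertionBlocked_three_after_block {i : ℕ} (hn : 6 ≤ n) (hi₁ : 3 * n - 5 ≤ i)
    (hi₂ : i ≤ 5 * n - 9) : InsertionBlocked (abcacbcSeq n) i 3 := by
  rw [InsertionBlocked, abcacbcSeq_eq_map_range hn]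
  rcases le_or_gt i (3 * n - 2) with hi | hi
  · exact .inl <| not_sparse_insertIdx_map_range (j := 3 * n - 4) hi₂ (by omega)
      (by simp (disch := omega)) (by omega) (by omega)
  · exact .inr <| containsAbcacbc_insertIdx_map_range hi₂
      [1, 3, 3 * n - 7, 3 * n - 5, 3 * n - 4, 3 * n - 3] [] 2 1 3
      (by simp; omega) (by omega) (by simp (disch := omega); omega)

theorem insertionBlocked_after_block {i x : ℕ} (hn : 6 ≤ n) (hx : 4 ≤ x) (hxn : x ≤ n)
    (hi₁ : 3 * (n - x) + 4 < i) (hi₂ : i ≤ 3 * n - 2) :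
    InsertionBlocked (abcacbcSeq n) i x := by
  rw [InsertionBlocked, abcacbcSeq_eq_map_range hn]
  exact .inr <| containsAbcacbc_insertIdx_map_range (by omega)
    [3 * (n - x), 3 * (n - x) + 1, 3 * (n - x) + 2, 3 * (n - x) + 3] [3 * n - 2, 4 * n - 1 - x]
    1 2 x (by simp; omega) (by omega) (by simp (disch := omega); omega)

theorem insertionBlocked_in_decreasing_run {i x : ℕ} (hn : 6 ≤ n) (hx : 4 ≤ x) (hxn : x ≤ n)
    (hi₁ : 3 * n - 2 < i) (hi₂ : i ≤ 4 * n - 5) : InsertionBlocked (abcacbcSeq n) i x := by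
  rw [InsertionBlocked, abcacbcSeq_eq_map_range hn]
  obtain ⟨v, hv⟩ : ∃ v, v + i + 1 = 4 * n := ⟨4 * n - 1 - i, by omega⟩
  rcases lt_or_ge x v with h | h
  · exact .inr <| containsAbcacbc_insertIdx_map_range (by omega)
      [3 * (n - v), 3 * (n - v) + 2, 3 * (n - x) + 2, 3 * (n - x) + 3] [i, 4 * n - 1 - x]
      1 v x (by simp; omega) (by omega) (by simp (disch := omega); omega)
  rcases le_or_gt x (v + 2) with h' | h'
  · exact .inl <| not_sparse_insertIdx_map_range (j := 4 * n - 1 - x) (by omega) (by omega)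
      (by simp (disch := omega); omega) (by omega) (by omega)
  · exact .inr <| containsAbcacbc_insertIdx_map_range (by omega)
      [3 * (n - x) + 5, 3 * (n - v) + 2, 4 * n - 1 - x, 4 * n - x] [i, 4 * n - 10 + x]
      (x - 1) v x (by simp; omega) (by omega) (by simp (disch := omega); omega)

theorem insertionBlocked_in_increasing_run {i x : ℕ} (hn : 6 ≤ n) (hx : 4 ≤ x) (hxn : x ≤ n)
    (hi₁ : 4 * n - 5 < i) (hi₂ : i ≤ 5 * n - 9) : InsertionBlocked (abcacbcSeq n) i x := by
  rw [InsertionBlocked, abcacbcSeq_eq_map_range hn]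
  obtain ⟨w, hw⟩ : ∃ w, i + 10 = 4 * n + w := ⟨i + 10 - 4 * n, by omega⟩
  rcases le_or_gt (x + 2) w with h | h
  · rcases eq_or_lt_of_le (show 6 ≤ w by omega) with rfl | hw7
    · exact .inl <| not_sparse_insertIdx_map_range (j := 4 * n - 5) hi₂ (by omega)
        (by simp (disch := omega); omega) (by omega) (by omega)
    · exact .inr <| containsAbcacbc_insertIdx_map_range hi₂
        [3 * (n + 1 - w), 3 * (n + 1 - w) + 2, 3 * (n - x) + 2, 3 * (n - x) + 3, 4 * n - 1 - x,
          i - 1] [] 1 (w - 1) x (by simp; omega) (by omega) (by simp (disch := omega); omega)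
  rcases le_or_gt x (w + 1) with h' | h'
  · rcases le_or_gt 6 x with hx6 | hx6
    · exact .inl <| not_sparse_insertIdx_map_range (j := 4 * n - 10 + x) hi₂ (by omega)
        (by simp (disch := omega); omega) (by omega) (by omega)
    · exact .inl <| not_sparse_insertIdx_map_range (j := 4 * n - 1 - x) hi₂ (by omega)
        (by simp (disch := omega); omega) (by omega) (by omega)
  · exact .inr <| containsAbcacbc_insertIdx_map_range hi₂
      [3 * (n - x) + 5, 3 * (n - w) + 2, 4 * n - 1 - x, 4 * n - x] [i, 4 * n - 10 + x]
      (x - 1) w x (by simp; omega) (by omega) (by simp (disch := omega); omega)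

theorem insertionBlocked_of_three_le {i x : ℕ} (hn : 6 ≤ n) (hx : 3 ≤ x) (hxn : x ≤ n)
    (hi : i ≤ 5 * n - 9) : InsertionBlocked (abcacbcSeq n) i x := by
  rcases le_or_gt i (3 * (n - x) + 4) with h₁ | h₁
  · exact insertionBlocked_up_to_block hn hx hxn h₁
  obtain rfl | hx4 := eq_or_lt_of_le hx
  · exact insertionBlocked_three_after_block hn (by omega) hi
  rcases le_or_gt i (3 * n - 2) with h₂ | h₂
  · exact insertionBlocked_after_block hn hx4 hxn h₁ h₂
  rcases le_or_gt i (4 * n - 5) with h₃ | h₃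
  · exact insertionBlocked_in_decreasing_run hn hx4 hxn h₂ h₃
  · exact insertionBlocked_in_increasing_run hn hx4 hxn h₃ hi

end abcacbcSeq

theorem stmt1 {α : Type*} [DecidableEq α] (a b c : α)
    (hab : a ≠ b) (hac : a ≠ c) (hbc : b ≠ c) (n : ℕ) (hn : 6 ≤ n) :
    Saturated [a, b, c, a, c, b, c] (abcacbcSeq n) (Set.Icc 1 n) := by
  have hcard : ([a, b, c, a, c, b, c] : List α).toFinset.card = 3 :=
    Finset.card_eq_three.2 ⟨a, b, c, hab, hac, hbc, by ext; simp⟩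
  refine ⟨hcard ▸ sparse_abcacbcSeq hn,
    (containsCopy_abcacbc_iff hab hac hbc).not.2 (not_containsAbcacbc_abcacbcSeq hn),
    mem_Icc_of_mem_abcacbcSeq hn, fun x hx i hi => ?_⟩
  rw [hcard, containsCopy_abcacbc_iff hab hac hbc]
  rw [length_abcacbcSeq hn] at hi
  obtain ⟨hx₁, hxn⟩ := hx
  rcases le_or_gt x 2 with hx₂ | hx₃
  · exact insertionBlocked_of_le_two hn (by omega) hi
  · exact insertionBlocked_of_three_le hn hx₃ hxn hi
end

section
/- Let a, b, c be three pairwise distinct letters, let t ≥ 2 be an integer, and let u = (abc)^t be the concatenation of t copies of abc. For every integer n ≥ 3, the sequence over the alphabet {1,…,n} given by (1,2,n)^{t−1} (1,2,n−1)^{t−1} ⋯ (1,2,3)^{t−1} 1,2 — that is, for each k = n, n−1, …, 3 in decreasing order, t−1 consecutive copies of the block 1,2,k, followed by the two letters 1,2 — is u-saturated. -/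
/-!
The sequence is `weave 1 2 K = 1 2 k₁ 1 2 k₂ ⋯ 1 2 kₘ 1 2`, whose spine `K` lists the letters
`n, n - 1, …, 3` in blocks of `t - 1` equal letters. Positions `≡ 0, 1 (mod 3)` carry `1` and `2`
and the remaining ones carry spine letters, so the sequence is `3`-sparse. A copy of `(abc)^t`
needs three distinct letters occurring `t` times each, but only `1` and `2` occur that often.
An inserted `1` or `2` lands within distance `2` of another one. An inserted `m ≥ 3` placed
before the segment `(1 2 m)^(t-1) 1 2` creates `(m 1 2)^t`, placed after it creates `(1 2 m)^t`,
and placed inside it lands next to an `m`.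
-/

namespace List

variable {A : Type*}

theorem range_flatMap_const (m : ℕ) (l : List A) :
    (range m).flatMap (fun _ => l) = (replicate m l).flatten := by
  rw [flatMap_def, map_const', length_range]

theorem flatten_replicate_succ_cons (k : ℕ) (a : A) (l : List A) :
    (replicate (k + 1) (a :: l)).flatten = a :: ((replicate k (l ++ [a])).flatten ++ l) := by
  induction k with
  | zero => simp
  | succ k ih => rw [replicate_succ, flatten_cons, ih]; simp [replicate_succ]

theorem count_flatMap_replicate [DecidableEq A] (D : List A) (k : ℕ) (z : A) :
    (D.flatMap (replicate k)).count z = k * D.count z := by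
  induction D with
  | nil => simp
  | cons d D ih => by_cases h : d = z <;> simp [count_replicate, ih, h, Nat.mul_add, Nat.add_comm]

theorem cons_sublist_insertIdx {P : List A} {i : ℕ} (hi : i ≤ P.length) (a : A) (Q : List A) :
    a :: Q <+ (P ++ Q).insertIdx i a := by
  induction P generalizing i with
  | nil => simp at hi; simp [hi]
  | cons p P ih =>
    cases i with
    | zero => exact ((sublist_append_right _ _).cons p).cons_cons a
    | succ i => exact (ih (by simpa using hi)).cons p

theorem append_singleton_sublist_insertIdx {P Q : List A} {i : ℕ} (hPi : P.length ≤ i)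
    (hi : i ≤ (P ++ Q).length) (a : A) : P ++ [a] <+ (P ++ Q).insertIdx i a := by
  induction P generalizing i with
  | nil => simpa using (mem_insertIdx hi).2 (Or.inl rfl)
  | cons p P ih =>
    obtain ⟨i, rfl⟩ : ∃ j, i = j + 1 := Nat.exists_eq_add_one.mpr (by simp at hPi; omega)
    exact (ih (by simpa using hPi) (by simpa using hi)).cons_cons p

end List

section Weave

open List

variable {A : Type*}

theorem not_sparse_insertIdx_s3 {r : ℕ} {s : List A} {i p : ℕ} {a : A} (hi : i ≤ s.length)
    (hp : p < s.length) (ha : s[p] = a) (hpi : i < p + r) (hip : p + 1 < i + r) :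
    ¬ Sparse r (s.insertIdx i a) := by
  subst ha
  have hlen := length_insertIdx_of_le_length hi s[p]
  intro hs
  rcases Nat.lt_or_ge p i with hlt | hge
  · refine hs p i hlt (by omega) hpi ?_
    simp [getElem_insertIdx_of_lt hlt]
  · refine hs i (p + 1) (by omega) (by omega) hip ?_
    simp [getElem_insertIdx_of_gt (Nat.lt_succ_of_le hge)]

def weave (x y : A) (K : List A) : List A := K.flatMap (fun k => [x, y, k]) ++ [x, y]

variable (x y : A) {K : List A}

@[simp] theorem weave_nil : weave x y [] = [x, y] := rfl

@[simp] theorem weave_cons (k : A) (K : List A) :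
    weave x y (k :: K) = x :: y :: k :: weave x y K := by
  simp [weave]

@[simp] theorem length_weave (K : List A) : (weave x y K).length = 3 * K.length + 2 := by
  simp [weave, length_flatMap, Nat.mul_comm]

theorem weave_append (K L : List A) :
    weave x y (K ++ L) = K.flatMap (fun k => [x, y, k]) ++ weave x y L := by
  simp [weave]

theorem weave_eq_cons_cons (K : List A) :
    weave x y K = x :: y :: K.flatMap (fun k => [k, x, y]) := by
  induction K with
  | nil => rfl
  | cons k K ih => simp [ih]

theorem mem_weave {z : A} : z ∈ weave x y K ↔ z = x ∨ z = y ∨ z ∈ K := by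
  induction K with
  | nil => simp
  | cons k K ih => simp only [weave_cons, mem_cons, ih]; tauto

theorem count_weave [DecidableEq A] {z : A} (hzx : z ≠ x) (hzy : z ≠ y) (K : List A) :
    (weave x y K).count z = K.count z := by
  induction K with
  | nil => simp [hzx.symm, hzy.symm]
  | cons k K ih => simp [count_cons, hzx.symm, hzy.symm, ih]

theorem getElem_weave_cases {p : ℕ} (hp : p < (weave x y K).length) :
    ((weave x y K)[p] = x ∧ p % 3 = 0) ∨ ((weave x y K)[p] = y ∧ p % 3 = 1) ∨
      ((weave x y K)[p] ∈ K ∧ p % 3 = 2) := by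
  induction K generalizing p with
  | nil =>
    match p, hp with
    | 0, _ => simp
    | 1, _ => simp
  | cons k K ih =>
    match p, hp with
    | 0, _ => simp
    | 1, _ => simp
    | 2, _ => simp
    | p + 3, hp =>
      simp only [weave_cons, getElem_cons_succ, mem_cons, Nat.add_mod_right]
      have := ih (p := p) (by simp at hp ⊢; omega)
      tauto

theorem getElem_weave_three_mul_add_two {q : ℕ} (hq : q < K.length) :
    (weave x y K)[3 * q + 2]'(by simp; omega) = K[q] := by
  induction K generalizing q with
  | nil => simp at hq
  | cons k K ih =>
    cases q with
    | zero => simp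
    | succ q => simpa [Nat.mul_succ] using ih (q := q) (by simpa using hq)

theorem sparse_weave (hxy : x ≠ y) (hxK : x ∉ K) (hyK : y ∉ K) : Sparse 3 (weave x y K) := by
  intro i j hij hj hji heq
  have hi := getElem_weave_cases x y (hij.trans hj)
  have hj := getElem_weave_cases x y hj
  simp only [get_eq_getElem] at heq
  rw [heq] at hi
  generalize (weave x y K)[j] = c at hi hj
  rcases hi with ⟨rfl, _⟩ | ⟨rfl, _⟩ | ⟨hc, _⟩ <;> rcases hj with ⟨h, _⟩ | ⟨h, _⟩ | ⟨h, _⟩ <;>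
    first | omega | simp_all

end Weave

section Saturation

open List

variable {A : Type*} (x y : A)

theorem not_sparse_insertIdx_weave_left {K : List A} {i : ℕ} (hi : i ≤ (weave x y K).length) :
    ¬ Sparse 3 ((weave x y K).insertIdx i x) := by
  have hp : 3 * (i / 3) < (weave x y K).length := by simp at hi ⊢; omega
  have hx : (weave x y K)[3 * (i / 3)] = x := by
    rcases getElem_weave_cases x y hp with h | h | h <;> first | exact h.1 | omega
  exact not_sparse_insertIdx_s3 hi hp hx (by omega) (by omega)

theorem not_sparse_insertIdx_weave_right {K : List A} {i : ℕ} (hi : i ≤ (weave x y K).length) :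
    ¬ Sparse 3 ((weave x y K).insertIdx i y) := by
  have hp : 3 * (i / 3) + 1 < (weave x y K).length := by simp at hi ⊢; omega
  have hy : (weave x y K)[3 * (i / 3) + 1] = y := by
    rcases getElem_weave_cases x y hp with h | h | h <;> first | exact h.1 | omega
  exact not_sparse_insertIdx_s3 hi hp hy (by omega) (by omega)

variable {z : A} {k : ℕ} (K₁ K₂ : List A)

theorem weave_append_replicate_append :
    weave x y (K₁ ++ (replicate k z ++ K₂)) =
      K₁.flatMap (fun k => [x, y, k]) ++ ((replicate k [x, y, z]).flatten ++
        x :: y :: K₂.flatMap (fun k => [k, x, y])) := by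
  rw [weave_append, weave_append, flatMap_replicate, weave_eq_cons_cons]

theorem sublist_insertIdx_weave_of_le {i : ℕ} (hi : i ≤ 3 * K₁.length) :
    (replicate (k + 1) [z, x, y]).flatten <+
      (weave x y (K₁ ++ (replicate k z ++ K₂))).insertIdx i z := by
  rw [weave_append_replicate_append, flatten_replicate_succ_cons]
  have hi' : i ≤ (K₁.flatMap fun k => [x, y, k]).length := by
    simpa [length_flatMap, Nat.mul_comm] using hi
  refine Sublist.trans ?_ (cons_sublist_insertIdx hi' z _)
  exact ((sublist_append_left _ _).cons_cons y |>.cons_cons x).append_left _ |>.cons_cons z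

theorem sublist_insertIdx_weave_of_ge {i : ℕ} (hi : 3 * K₁.length + 3 * k + 2 ≤ i)
    (hi' : i ≤ (weave x y (K₁ ++ (replicate k z ++ K₂))).length) :
    (replicate (k + 1) [x, y, z]).flatten <+
      (weave x y (K₁ ++ (replicate k z ++ K₂))).insertIdx i z := by
  rw [weave_append_replicate_append] at hi' ⊢
  have hsplit : K₁.flatMap (fun k => [x, y, k]) ++ ((replicate k [x, y, z]).flatten ++
      x :: y :: K₂.flatMap (fun k => [k, x, y])) =
      (K₁.flatMap (fun k => [x, y, k]) ++ (replicate k [x, y, z]).flatten ++ [x, y]) ++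
        K₂.flatMap (fun k => [k, x, y]) := by simp
  rw [hsplit] at hi' ⊢
  refine Sublist.trans ?_ (append_singleton_sublist_insertIdx ?_ hi' z)
  · rw [replicate_succ', flatten_append]
    simp
  · simp [length_flatMap]; omega

theorem not_sparse_insertIdx_weave_of_lt (hk : 0 < k) {i : ℕ} (hi : 3 * K₁.length < i)
    (hi' : i < 3 * K₁.length + 3 * k + 2) :
    ¬ Sparse 3 ((weave x y (K₁ ++ (replicate k z ++ K₂))).insertIdx i z) := by
  set q := K₁.length + min ((i - 3 * K₁.length - 1) / 3) (k - 1)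
  have hq : q < (K₁ ++ (replicate k z ++ K₂)).length := by simp [q]; omega
  have hz : (weave x y (K₁ ++ (replicate k z ++ K₂)))[3 * q + 2]'(by simp; omega) = z := by
    rw [getElem_weave_three_mul_add_two x y hq, getElem_append_right (by omega),
      getElem_append_left (by simp; omega), getElem_replicate]
  exact not_sparse_insertIdx_s3 (by simp; omega) _ hz (by omega) (by omega)

theorem not_sparse_or_sublist_insertIdx_weave (hk : 0 < k) {i : ℕ}
    (hi : i ≤ (weave x y (K₁ ++ (replicate k z ++ K₂))).length) :
    ¬ Sparse 3 ((weave x y (K₁ ++ (replicate k z ++ K₂))).insertIdx i z) ∨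
      (replicate (k + 1) [z, x, y]).flatten <+
        (weave x y (K₁ ++ (replicate k z ++ K₂))).insertIdx i z ∨
      (replicate (k + 1) [x, y, z]).flatten <+
        (weave x y (K₁ ++ (replicate k z ++ K₂))).insertIdx i z := by
  rcases le_or_gt i (3 * K₁.length) with h₁ | h₁
  · exact Or.inr (Or.inl (sublist_insertIdx_weave_of_le x y K₁ K₂ h₁))
  rcases lt_or_ge i (3 * K₁.length + 3 * k + 2) with h₂ | h₂
  · exact Or.inl (not_sparse_insertIdx_weave_of_lt x y K₁ K₂ hk h₁ h₂)
  · exact Or.inr (Or.inr (sublist_insertIdx_weave_of_ge x y K₁ K₂ h₂ hi))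

end Saturation

section Copies

open List

variable {α A : Type*} {a b c : α}

theorem card_toFinset_flatten_replicate_triple [DecidableEq α] (hab : a ≠ b) (hac : a ≠ c)
    (hbc : b ≠ c) {t : ℕ} (ht : t ≠ 0) : ((replicate t [a, b, c]).flatten).toFinset.card = 3 := by
  have : ((replicate t [a, b, c]).flatten).toFinset = [a, b, c].toFinset := by
    ext; simp [ht]
  rw [this, toFinset_card_of_nodup (by simp [hab, hac, hbc])]
  rfl

theorem containsCopy_flatten_replicate_triple (hab : a ≠ b) (hac : a ≠ c) (hbc : b ≠ c)
    {a' b' c' : A} (hab' : a' ≠ b') (hac' : a' ≠ c') (hbc' : b' ≠ c') {t : ℕ} {s : List A}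
    (h : (replicate t [a', b', c']).flatten <+ s) :
    ContainsCopy s (replicate t [a, b, c]).flatten := by
  classical
  let f : α → A := fun w => if w = a then a' else if w = b then b' else c'
  refine ⟨_, h, f, ?_, ?_⟩
  · intro v hv w hw hvw
    simp only [mem_flatten, mem_replicate] at hv hw
    obtain ⟨_, ⟨_, rfl⟩, hv⟩ := hv
    obtain ⟨_, ⟨_, rfl⟩, hw⟩ := hw
    simp only [mem_cons, not_mem_nil, or_false] at hv hw
    rcases hv with rfl | rfl | rfl <;> rcases hw with rfl | rfl | rfl <;>
      simp_all [f, eq_comm]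
  · simp [map_flatten, map_replicate, f, hab.symm, hac.symm, hbc.symm]

theorem count_flatten_replicate [BEq A] (t : ℕ) (l : List A) (w : A) :
    ((replicate t l).flatten).count w = t * l.count w := by
  simp [count_flatten]

theorem not_containsCopy_flatten_replicate_triple [DecidableEq A] (hab : a ≠ b) (hac : a ≠ c)
    (hbc : b ≠ c) {t : ℕ} (ht : t ≠ 0) {s : List A} {x y : A}
    (hs : ∀ w, w ≠ x → w ≠ y → s.count w < t) :
    ¬ ContainsCopy s (replicate t [a, b, c]).flatten := by
  classical
  rintro ⟨v, hvs, f, hf, rfl⟩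
  have hu : ∀ w ∈ [a, b, c], w ∈ (replicate t [a, b, c]).flatten := by simp [ht]
  have hcount : ∀ w ∈ [a, b, c], t ≤ s.count (f w) := fun w hw =>
    calc t ≤ t * [a, b, c].count w := Nat.le_mul_of_pos_right t (count_pos_iff.2 hw)
      _ = ((replicate t [a, b, c]).flatten).count w := (count_flatten_replicate _ _ _).symm
      _ ≤ _ := count_le_count_map
      _ ≤ s.count (f w) := hvs.count_le _
  have hne : ∀ v ∈ [a, b, c], ∀ w ∈ [a, b, c], v ≠ w → f v ≠ f w := fun v hv w hw hvw h =>
    hvw (hf v (hu v hv) w (hu w hw) h)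
  obtain ⟨w, hw, hwx, hwy⟩ : ∃ w ∈ [a, b, c], f w ≠ x ∧ f w ≠ y := by
    have hfab := hne a (by simp) b (by simp) hab
    have hfac := hne a (by simp) c (by simp) hac
    have hfbc := hne b (by simp) c (by simp) hbc
    by_contra! h
    simp only [mem_cons, not_mem_nil, or_false, forall_eq_or_imp, forall_eq,
      ← or_iff_not_imp_left] at h
    obtain ⟨ha | ha, hb | hb, hc | hc⟩ := h <;> simp_all
  exact (hcount w hw).not_gt (hs _ hwx hwy)

end Copies

open List in
theorem saturated_weave_flatMap_replicate {α A : Type*} [DecidableEq α] {a b c : α}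
    (hab : a ≠ b) (hac : a ≠ c) (hbc : b ≠ c) {x y : A} (hxy : x ≠ y) {D : List A}
    (hD : D.Nodup) (hxD : x ∉ D) (hyD : y ∉ D) {S : Set A}
    (hS : ∀ z, z ∈ S ↔ z = x ∨ z = y ∨ z ∈ D) {k : ℕ} (hk : 0 < k) :
    Saturated (replicate (k + 1) [a, b, c]).flatten (weave x y (D.flatMap (replicate k))) S := by
  have hK : ∀ z, z ∈ D.flatMap (replicate k) ↔ z ∈ D := by
    simp [mem_flatMap, mem_replicate, hk.ne']
  rw [Saturated, card_toFinset_flatten_replicate_triple hab hac hbc k.succ_ne_zero]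
  refine ⟨sparse_weave x y hxy (by rwa [hK]) (by rwa [hK]), ?_, ?_, ?_⟩
  · classical
    refine not_containsCopy_flatten_replicate_triple hab hac hbc k.succ_ne_zero
      (x := x) (y := y) fun w hwx hwy => ?_
    rw [count_weave x y hwx hwy, count_flatMap_replicate]
    calc k * D.count w ≤ k * 1 := Nat.mul_le_mul_left _ (nodup_iff_count_le_one.1 hD w)
      _ < k + 1 := by omega
  · intro z hz
    rw [hS, ← hK]
    exact (mem_weave x y).1 hz
  · intro z hz i hi
    rcases (hS z).1 hz with rfl | rfl | hzD
    · exact Or.inl (not_sparse_insertIdx_weave_left z y hi)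
    · exact Or.inl (not_sparse_insertIdx_weave_right x z hi)
    obtain ⟨D₁, D₂, rfl⟩ := append_of_mem hzD
    have hzx : z ≠ x := fun h => hxD (h ▸ hzD)
    have hzy : z ≠ y := fun h => hyD (h ▸ hzD)
    rw [flatMap_append, flatMap_cons] at hi ⊢
    rcases not_sparse_or_sublist_insertIdx_weave x y _ _ hk hi with h | h | h
    · exact Or.inl h
    · exact Or.inr (containsCopy_flatten_replicate_triple hab hac hbc hzx hzy hxy h)
    · exact Or.inr (containsCopy_flatten_replicate_triple hab hac hbc hxy hzx.symm hzy.symm h)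

open List in
theorem stmt3 {α : Type*} [DecidableEq α] (a b c : α)
    (hab : a ≠ b) (hac : a ≠ c) (hbc : b ≠ c)
    (t : ℕ) (ht : 2 ≤ t) (n : ℕ) (hn : 3 ≤ n) :
    Saturated ((List.range t).flatMap (fun _ => [a, b, c]))
      (((List.range (n - 2)).flatMap (fun i =>
          (List.range (t - 1)).flatMap (fun _ => [1, 2, n - i]))) ++ [1, 2])
      (Set.Icc 1 n) := by
  obtain ⟨k, rfl⟩ : ∃ k, t = k + 1 := ⟨t - 1, by omega⟩
  have hword : (range (n - 2)).flatMap (fun i => (range (k + 1 - 1)).flatMap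
      (fun _ => [1, 2, n - i])) ++ [1, 2] =
      weave 1 2 (((range (n - 2)).map (n - ·)).flatMap (replicate k)) := by
    simp only [weave, range_flatMap_const, flatMap_assoc, flatMap_map, flatMap_replicate,
      Nat.add_sub_cancel]
  rw [range_flatMap_const, hword]
  refine saturated_weave_flatMap_replicate hab hac hbc (by norm_num) ?_ ?_ ?_ (fun z => ?_)
    (by omega)
  · exact nodup_range.map_on fun i hi j hj h => by rw [mem_range] at hi hj; omega
  · simp only [mem_map, mem_range, not_exists, not_and]; omega
  · simp only [mem_map, mem_range, not_exists, not_and]; omega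
  · simp only [Set.mem_Icc, mem_map, mem_range]
    constructor
    · rintro ⟨h₁, h₂⟩
      by_cases hz : z ≤ 2
      · omega
      · exact Or.inr (Or.inr ⟨n - z, by omega, by omega⟩)
    · rintro (rfl | rfl | ⟨i, hi, rfl⟩) <;> omega
end

section
/- Let u be an irreducible sequence with exactly r ≥ 3 distinct letters such that the first two letters of u are equal and the last two letters of u are equal. Let n = r·m for a positive integer m, and for each k = 0, 1, …, m−1 let s_r^{rk}(u) denote the copy of s_r(u) on the letters rk+1, rk+2, …, rk+r (with a_i renamed to rk+i). Then the concatenation s_r^{0}(u) s_r^{r}(u) ⋯ s_r^{r(m−1)}(u) is a u-saturated sequence over the alphabet {1,…,n}. -/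
/-- A sequence is irreducible if it cannot be decomposed as a concatenation of two
nonempty sequences having no letters in common. -/
def IrreducibleSeq {α : Type*} (u : List α) : Prop :=
  ¬ ∃ u₁ u₂ : List α, u₁ ≠ [] ∧ u₂ ≠ [] ∧ u = u₁ ++ u₂ ∧ ∀ x ∈ u₁, x ∉ u₂

/-- The initial segment of length `len` of the periodic sequence
`(base+1)(base+2)⋯(base+r)(base+1)(base+2)⋯` on the `r` letters `base+1,…,base+r`. -/
def periodicSeg (r base len : ℕ) : List ℕ :=
  (List.range len).map (fun i => base + i % r + 1)

/-!
Inside a block the sequence is `r`-periodic and different blocks use disjoint letters, so the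
concatenation is `r`-sparse, and by irreducibility a copy of `u` would have to lie in a single block,
that is, in a copy of `s_r(u)`.

A letter `x` inserted strictly inside its own block has a twin less than `r` positions away. If `x` is
inserted before its block, take a copy of `u` in the periodic segment of length `L + 1`. As `u` starts
with a repeated letter, its second letter lies at least `r` positions from the start. Drop the first
letter and shift the rest back by some `c ∈ [1, r]` so that the second letter lands on the residue of
`x`. The shifted part fits into the block, and `x` plays the first letter. Insertion after the block
is symmetric: use the last two letters of `u` and shift forward by some `c < r`.
-/

open List

namespace List

variable {α : Type*}

theorem insertIdx_append_of_le_length {p q : List α} {i : ℕ} (h : i ≤ p.length) (x : α) :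
    (p ++ q).insertIdx i x = p.insertIdx i x ++ q := by
  induction p generalizing i with
  | nil => simp_all
  | cons a p ih => cases i <;> simp_all

theorem insertIdx_length_add_append (p q : List α) (i : ℕ) (x : α) :
    (p ++ q).insertIdx (p.length + i) x = p ++ q.insertIdx i x := by
  induction p with
  | nil => simp
  | cons a p ih => simp [Nat.succ_add, ih]

theorem insertIdx_append_append {p t : List α} {j : ℕ} (h : j ≤ t.length) (q : List α) (x : α) :
    (p ++ t ++ q).insertIdx (p.length + j) x = p ++ t.insertIdx j x ++ q := by
  rw [append_assoc, insertIdx_length_add_append, insertIdx_append_of_le_length h, append_assoc]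

theorem cons_sublist_insertIdx_append_append {p : List α} {i : ℕ} (h : i ≤ p.length)
    (t q : List α) (x : α) : x :: t <+ (p ++ t ++ q).insertIdx i x := by
  rw [append_assoc, insertIdx_append_of_le_length h]
  exact (singleton_sublist.mpr ((mem_insertIdx h).mpr (.inl rfl))).append (sublist_append_left t q)

theorem append_singleton_sublist_insertIdx_append {p t q : List α} {i : ℕ}
    (h₁ : p.length + t.length ≤ i) (h₂ : i ≤ (p ++ t ++ q).length) (x : α) :
    t ++ [x] <+ (p ++ t ++ q).insertIdx i x := by
  obtain ⟨j, rfl⟩ := Nat.exists_eq_add_of_le h₁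
  have hj : j ≤ q.length := by simp only [length_append] at h₂; omega
  rw [← length_append, insertIdx_length_add_append]
  exact (sublist_append_right p t).append (singleton_sublist.mpr ((mem_insertIdx hj).mpr (.inl rfl)))

end List

section Copies

variable {α β : Type*}

theorem ContainsCopy.of_sublist {u : List α} {s t : List β} (h : ContainsCopy t u) (hts : t <+ s) :
    ContainsCopy s u :=
  let ⟨v, hvt, hv⟩ := h
  ⟨v, hvt.trans hts, hv⟩

theorem containsCopy_iff_exists_strictMono [Nonempty β] {u : List α} {s : List β} :
    ContainsCopy s u ↔ ∃ Φ : Fin u.length → Fin s.length, StrictMono Φ ∧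
      ∀ k l, u[k] = u[l] ↔ s[Φ k] = s[Φ l] := by
  constructor
  · rintro ⟨v, hvs, f, hf, rfl⟩
    obtain ⟨e, he⟩ := sublist_iff_exists_fin_orderEmbedding_get_eq.mp hvs
    refine ⟨e ∘ Fin.cast (length_map f).symm, e.strictMono.comp fun _ _ h => h, fun k l => ?_⟩
    have hget : ∀ k : Fin u.length, s[e (Fin.cast (length_map f).symm k)] = f u[k] := fun k => by
      simpa using (he (Fin.cast (length_map f).symm k)).symm
    simp only [Function.comp_apply, hget]
    exact ⟨congrArg f, hf _ (getElem_mem _) _ (getElem_mem _)⟩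
  · rintro ⟨Φ, hΦ, hpat⟩
    have hfac : (fun k => s[Φ k]).FactorsThrough (fun k : Fin u.length => u[k]) :=
      fun k l h => (hpat k l).1 h
    set f := Function.extend (fun k : Fin u.length => u[k]) (fun k => s[Φ k])
      (fun _ => Classical.arbitrary β)
    have hf : ∀ k : Fin u.length, f u[k] = s[Φ k] := hfac.extend_apply _
    refine ⟨u.map f, sublist_iff_exists_fin_orderEmbedding_get_eq.mpr
      ⟨(Fin.castOrderIso (length_map f)).toOrderEmbedding.trans (OrderEmbedding.ofStrictMono Φ hΦ),
        fun k => by simpa using hf (Fin.cast (length_map f) k)⟩, f, ?_, rfl⟩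
    intro x hx y hy hxy
    obtain ⟨k, hk, rfl⟩ := getElem_of_mem hx
    obtain ⟨l, hl, rfl⟩ := getElem_of_mem hy
    exact (hpat ⟨k, hk⟩ ⟨l, hl⟩).2 ((hf ⟨k, hk⟩).symm.trans (hxy.trans (hf ⟨l, hl⟩)))

theorem IrreducibleSeq.containsCopy_append {u : List α} (hu : IrreducibleSeq u) {s t : List β}
    (hst : ∀ x ∈ s, x ∉ t) (h : ContainsCopy (s ++ t) u) :
    ContainsCopy s u ∨ ContainsCopy t u := by
  obtain ⟨v, hv, f, hf, rfl⟩ := h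
  obtain ⟨v₁, v₂, hv₁₂, hv₁, hv₂⟩ := sublist_append_iff.mp hv
  obtain ⟨u₁, u₂, rfl, rfl, rfl⟩ := map_eq_append_iff.mp hv₁₂
  by_cases h₁ : u₁ = []
  · subst h₁
    exact .inr ⟨_, hv₂, f, by simpa using hf, rfl⟩
  by_cases h₂ : u₂ = []
  · subst h₂
    exact .inl ⟨_, hv₁, f, by simpa using hf, by simp⟩
  exact (hu ⟨u₁, u₂, h₁, h₂, rfl, fun x hx₁ hx₂ =>
    hst _ (hv₁.subset (mem_map_of_mem hx₁)) (hv₂.subset (mem_map_of_mem hx₂))⟩).elim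

end Copies

section Sparsity

variable {β : Type*} {r : ℕ}

theorem Sparse.append {s t : List β} (hs : Sparse r s) (ht : Sparse r t) (hst : ∀ x ∈ s, x ∉ t) :
    Sparse r (s ++ t) := by
  intro i j hij hj hjr
  simp only [get_eq_getElem, length_append] at hj ⊢
  rcases lt_or_ge j s.length with hjs | hjs
  · rw [getElem_append_left (hij.trans hjs), getElem_append_left hjs]
    simpa using hs i j hij hjs hjr
  rcases lt_or_ge i s.length with his | his
  · rw [getElem_append_left his, getElem_append_right hjs]
    exact fun h => hst _ (getElem_mem his) (h ▸ getElem_mem _)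
  · rw [getElem_append_right his, getElem_append_right hjs]
    simpa using ht (i - s.length) (j - s.length) (by omega) (by omega) (by omega)

theorem Sparse.infix {s t : List β} (hs : Sparse r s) (h : t <:+: s) : Sparse r t := by
  obtain ⟨p, q, rfl⟩ := h
  intro i j hij hj hjr
  have hlen : (p ++ t).length = p.length + t.length := length_append
  have := hs (p.length + i) (p.length + j) (by omega) (by simp only [length_append]; omega) (by omega)
  simp only [get_eq_getElem] at this ⊢
  rw [getElem_append_left (as := p ++ t) (by omega), getElem_append_left (as := p ++ t) (by omega),
    getElem_append_right (by omega), getElem_append_right (by omega)] at this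
  simpa using this

end Sparsity

section Arithmetic

theorem add_le_of_natCast_eq {r a b : ℕ} (h : (a : ZMod r) = b) (hab : a < b) : a + r ≤ b :=
  ((ZMod.natCast_eq_natCast_iff _ _ _).mp h).add_le_of_lt hab

theorem exists_mod_eq_near {r L t e : ℕ} (hr : 2 ≤ r) (hrL : r ≤ L) (ht : 0 < t) (htL : t < L)
    (he : e < r) : ∃ q < L, q % r = e ∧ t < q + r ∧ q + 1 < t + r := by
  rcases le_or_gt e t with het | hte
  · have := Nat.div_add_mod (t - e) r
    have := Nat.mod_lt (t - e) (by omega : 0 < r)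
    refine ⟨e + r * ((t - e) / r), by omega, ?_, by omega, by omega⟩
    rw [Nat.add_mul_mod_self_left, Nat.mod_eq_of_lt he]
  · exact ⟨e, by omega, Nat.mod_eq_of_lt he, by omega, by omega⟩

end Arithmetic

section Periodic

variable {α : Type*} {r : ℕ}

@[simp] theorem periodicSeg_length (r b N : ℕ) : (periodicSeg r b N).length = N := by
  simp [periodicSeg]

@[simp] theorem periodicSeg_getElem {b N p : ℕ} (hp : p < (periodicSeg r b N).length) :
    (periodicSeg r b N)[p] = b + p % r + 1 := by
  simp [periodicSeg]

theorem lt_of_mem_periodicSeg {b N y : ℕ} (hy : y ∈ periodicSeg r b N) : b < y := by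
  obtain ⟨p, -, rfl⟩ := mem_map.mp hy
  omega

theorem le_of_mem_periodicSeg [NeZero r] {b N y : ℕ} (hy : y ∈ periodicSeg r b N) : y ≤ b + r := by
  obtain ⟨p, -, rfl⟩ := mem_map.mp hy
  have := Nat.mod_lt p (NeZero.pos r)
  omega

theorem sparse_periodicSeg (r b N : ℕ) : Sparse r (periodicSeg r b N) := by
  intro i j hij hj hjr h
  simp only [get_eq_getElem, periodicSeg_getElem] at h
  have := Nat.ModEq.add_le_of_lt (show i ≡ j [MOD r] by unfold Nat.ModEq; omega) hij
  omega

theorem not_sparse_insertIdx_periodicSeg (hr : 2 ≤ r) {L t : ℕ} (hrL : r ≤ L) (ht : 0 < t)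
    (htL : t < L) (b : ℕ) {e : ℕ} (he : e < r) :
    ¬ Sparse r ((periodicSeg r b L).insertIdx t (b + e + 1)) := by
  obtain ⟨q, hqL, hqe, hq⟩ := exists_mod_eq_near hr hrL ht htL he
  have hlen : ((periodicSeg r b L).insertIdx t (b + e + 1)).length = L + 1 := by
    simp [length_insertIdx_of_le_length, htL.le]
  intro hs
  rcases lt_or_ge q t with hqt | hqt
  · apply hs q t hqt (by omega) (by omega)
    simp only [get_eq_getElem]
    rw [getElem_insertIdx_of_lt hqt, getElem_insertIdx_self, periodicSeg_getElem, hqe]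
  · apply hs t (q + 1) (by omega) (by omega) (by omega)
    simp only [get_eq_getElem]
    rw [getElem_insertIdx_self, getElem_insertIdx_of_gt (by omega), periodicSeg_getElem,
      Nat.add_sub_cancel, hqe]

variable [NeZero r]

theorem containsCopy_of_residues {u : List α} {s : List ℕ} (J : Fin u.length → ℕ)
    (hJ : ∀ k l, u[k] = u[l] ↔ (J k : ZMod r) = J l) (Φ : Fin u.length → Fin s.length)
    (hΦ : StrictMono Φ) (b : ℕ) (δ : ZMod r)
    (hs : ∀ k, s[Φ k] = b + ((J k : ZMod r) + δ).val + 1) : ContainsCopy s u :=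
  containsCopy_iff_exists_strictMono.mpr ⟨Φ, hΦ, fun k l => by
    rw [hs, hs, hJ, add_left_inj, add_right_inj, (ZMod.val_injective r).eq_iff, add_left_inj]⟩

theorem containsCopy_periodicSeg_iff {u : List α} {b N : ℕ} :
    ContainsCopy (periodicSeg r b N) u ↔ ∃ J : Fin u.length → ℕ, StrictMono J ∧ (∀ k, J k < N) ∧
      ∀ k l, u[k] = u[l] ↔ (J k : ZMod r) = J l := by
  constructor
  · intro h
    obtain ⟨Φ, hΦ, hpat⟩ := containsCopy_iff_exists_strictMono.mp h
    refine ⟨fun k => Φ k, hΦ, fun k => by simpa using (Φ k).isLt, fun k l => ?_⟩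
    rw [hpat]
    simp only [Fin.getElem_fin, periodicSeg_getElem, ZMod.natCast_eq_natCast_iff']
    omega
  · rintro ⟨J, hJ, hJN, hpat⟩
    refine containsCopy_of_residues J hpat (fun k => ⟨J k, by simpa using hJN k⟩) hJ b 0 fun k => ?_
    simp [ZMod.val_natCast]

theorem containsCopy_periodicSeg_base_iff {u : List α} {b b' N : ℕ} :
    ContainsCopy (periodicSeg r b N) u ↔ ContainsCopy (periodicSeg r b' N) u :=
  containsCopy_periodicSeg_iff.trans containsCopy_periodicSeg_iff.symm

end Periodic

section Insertion

variable {α : Type*} {r : ℕ} [NeZero r]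

theorem containsCopy_cons_periodicSeg {u : List α} (hu : 2 ≤ u.length) (hfirst : u[0]? = u[1]?)
    {L : ℕ} (h : ContainsCopy (periodicSeg r 0 (L + 1)) u) (b : ℕ) {e : ℕ} (he : e < r) :
    ContainsCopy ((b + e + 1) :: periodicSeg r b L) u := by
  obtain ⟨J, hJ, hJL, hpat⟩ := containsCopy_periodicSeg_iff.mp h
  let k₀ : Fin u.length := ⟨0, by omega⟩
  let k₁ : Fin u.length := ⟨1, hu⟩
  rw [getElem?_eq_getElem k₀.isLt, getElem?_eq_getElem k₁.isLt, Option.some_inj] at hfirst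
  have h₀₁ : (J k₀ : ZMod r) = J k₁ := (hpat k₀ k₁).mp hfirst
  have hrJ : r ≤ J k₁ := by
    have := add_le_of_natCast_eq h₀₁ (hJ (show k₀ < k₁ from Nat.zero_lt_one))
    omega
  set δ : ZMod r := e - J k₁
  set c := r - δ.val
  have hc : (c : ZMod r) = -δ := by simp [c, Nat.cast_sub δ.val_lt.le]
  have hcr : 1 ≤ c ∧ c ≤ r := by
    have := δ.val_lt
    omega
  have hJc : ∀ k, k ≠ k₀ → c ≤ J k := fun k hk =>
    hcr.2.trans (hrJ.trans (hJ.monotone (Fin.mk_le_mk.mpr (by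
      have : k.val ≠ 0 := fun h0 => hk (Fin.ext h0)
      omega))))
  refine containsCopy_of_residues J hpat (fun k => if hk : k = k₀ then ⟨0, by simp⟩ else
    ⟨J k - c + 1, by have := hJL k; have := hJc k hk; simp; omega⟩) ?_ b δ fun k => ?_
  · intro k l hkl
    have hl : l ≠ k₀ := Fin.ne_of_gt (lt_of_le_of_lt (Nat.zero_le k.val) hkl)
    simp only [hl, dite_false]
    split_ifs with hk
    · exact Fin.mk_lt_mk.mpr (Nat.succ_pos _)
    · have := hJ hkl
      have := hJc k hk
      have := hJc l hl
      exact Fin.mk_lt_mk.mpr (by omega)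
  · split_ifs with hk
    · simp [hk, δ, h₀₁, ZMod.val_natCast_of_lt he]
    · simp only [Fin.getElem_fin, getElem_cons_succ, periodicSeg_getElem]
      rw [← ZMod.val_natCast, Nat.cast_sub (hJc k hk), hc, sub_neg_eq_add]

theorem containsCopy_periodicSeg_append {u : List α} (hu : 2 ≤ u.length)
    (hlast : u[u.length - 1]? = u[u.length - 2]?) {L : ℕ}
    (h : ContainsCopy (periodicSeg r 0 (L + 1)) u) (b : ℕ) {e : ℕ} (he : e < r) :
    ContainsCopy (periodicSeg r b L ++ [b + e + 1]) u := by
  obtain ⟨J, hJ, hJL, hpat⟩ := containsCopy_periodicSeg_iff.mp h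
  let k₁ : Fin u.length := ⟨u.length - 1, by omega⟩
  let k₂ : Fin u.length := ⟨u.length - 2, by omega⟩
  rw [getElem?_eq_getElem k₁.isLt, getElem?_eq_getElem k₂.isLt, Option.some_inj] at hlast
  have h₂₁ : (J k₂ : ZMod r) = J k₁ := (hpat k₂ k₁).mp hlast.symm
  have hJr : J k₂ + r ≤ L := by
    have := add_le_of_natCast_eq h₂₁ (hJ (show k₂ < k₁ from Fin.mk_lt_mk.mpr (by omega)))
    have := hJL k₁
    omega
  set δ : ZMod r := e - J k₂
  have hJk : ∀ k, k ≠ k₁ → J k ≤ J k₂ := fun k hk =>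
    hJ.monotone (Fin.mk_le_mk.mpr (by
      have : k.val ≠ u.length - 1 := fun h1 => hk (Fin.ext h1)
      omega))
  refine containsCopy_of_residues J hpat (fun k => if hk : k = k₁ then ⟨L, by simp⟩ else
    ⟨J k + δ.val, by have := hJk k hk; have := δ.val_lt; simp; omega⟩) ?_ b δ fun k => ?_
  · intro k l hkl
    have hk : k ≠ k₁ := Fin.ne_of_lt (lt_of_lt_of_le hkl (Nat.le_sub_one_of_lt l.isLt))
    simp only [hk, dite_false]
    split_ifs with hl
    · have := hJk k hk
      have := δ.val_lt
      exact Fin.mk_lt_mk.mpr (by omega)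
    · have := hJ hkl
      exact Fin.mk_lt_mk.mpr (by omega)
  · split_ifs with hk
    · simp [hk, δ, ← h₂₁, ZMod.val_natCast_of_lt he]
    · have := hJk k hk
      have := δ.val_lt
      simp only [Fin.getElem_fin]
      rw [getElem_append_left (by simp; omega), periodicSeg_getElem, ← ZMod.val_natCast,
        Nat.cast_add, ZMod.natCast_zmod_val]

theorem period_lt_of_containsCopy_periodicSeg {u : List α} (hu : 2 ≤ u.length)
    (hfirst : u[0]? = u[1]?) {b N : ℕ} (h : ContainsCopy (periodicSeg r b N) u) : r < N := by
  obtain ⟨J, hJ, hJN, hpat⟩ := containsCopy_periodicSeg_iff.mp h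
  let k₀ : Fin u.length := ⟨0, by omega⟩
  let k₁ : Fin u.length := ⟨1, hu⟩
  rw [getElem?_eq_getElem k₀.isLt, getElem?_eq_getElem k₁.isLt, Option.some_inj] at hfirst
  have := add_le_of_natCast_eq ((hpat k₀ k₁).mp hfirst) (hJ (show k₀ < k₁ from Nat.zero_lt_one))
  have := hJN k₁
  omega

end Insertion

def periodicBlocks (r L m : ℕ) : List ℕ :=
  (List.range m).flatMap fun k => periodicSeg r (r * k) L

section Blocks

variable {α : Type*} {r L : ℕ}

theorem periodicBlocks_succ (m : ℕ) :
    periodicBlocks r L (m + 1) = periodicBlocks r L m ++ periodicSeg r (r * m) L := by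
  simp [periodicBlocks, range_succ, flatMap_append]

theorem exists_periodicBlocks_eq_append {k m : ℕ} (hk : k < m) :
    ∃ rest, periodicBlocks r L m = periodicBlocks r L k ++ periodicSeg r (r * k) L ++ rest := by
  induction m with
  | zero => omega
  | succ m ih =>
    rcases (Nat.lt_succ_iff.mp hk).eq_or_lt with rfl | hk
    · exact ⟨[], by simp [periodicBlocks_succ]⟩
    · obtain ⟨rest, h⟩ := ih hk
      exact ⟨rest ++ periodicSeg r (r * m) L, by simp [periodicBlocks_succ, h]⟩

variable [NeZero r]

theorem mem_Icc_of_mem_periodicBlocks {m y : ℕ} (hy : y ∈ periodicBlocks r L m) :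
    y ∈ Set.Icc 1 (r * m) := by
  obtain ⟨k, hk, hy⟩ := mem_flatMap.mp hy
  have := lt_of_mem_periodicSeg hy
  have := le_of_mem_periodicSeg hy
  have := Nat.mul_le_mul_left r (mem_range.mp hk)
  have := Nat.mul_succ r k
  exact ⟨by omega, by omega⟩

theorem not_mem_periodicSeg_of_mem_periodicBlocks {m y : ℕ} (hy : y ∈ periodicBlocks r L m) :
    y ∉ periodicSeg r (r * m) L := fun hy' =>
  (mem_Icc_of_mem_periodicBlocks hy).2.not_gt (lt_of_mem_periodicSeg hy')

theorem sparse_periodicBlocks (m : ℕ) : Sparse r (periodicBlocks r L m) := by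
  induction m with
  | zero => intro i j _ hj; simp [periodicBlocks] at hj
  | succ m ih =>
    rw [periodicBlocks_succ]
    exact ih.append (sparse_periodicSeg r _ L) fun _ => not_mem_periodicSeg_of_mem_periodicBlocks

theorem not_containsCopy_periodicBlocks {u : List α} (hu : IrreducibleSeq u)
    (havoid : ¬ ContainsCopy (periodicSeg r 0 L) u) (m : ℕ) :
    ¬ ContainsCopy (periodicBlocks r L m) u := by
  induction m with
  | zero => exact fun h => havoid (h.of_sublist (nil_sublist _))
  | succ m ih =>
    rw [periodicBlocks_succ]
    intro h
    rcases hu.containsCopy_append (fun _ => not_mem_periodicSeg_of_mem_periodicBlocks) h with h | h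
    · exact ih h
    · exact havoid (containsCopy_periodicSeg_base_iff.mp h)

end Blocks

theorem stmt5_general {α : Type*} [DecidableEq α] (u : List α)
    (hr : 3 ≤ u.toFinset.card)
    (hfirst : u[0]? = u[1]?)
    (hlast : u[u.length - 1]? = u[u.length - 2]?)
    (hirr : IrreducibleSeq u)
    (L : ℕ)
    (havoid : ¬ ContainsCopy (periodicSeg u.toFinset.card 0 L) u)
    (hmax : ContainsCopy (periodicSeg u.toFinset.card 0 (L + 1)) u)
    (m : ℕ) :
    Saturated u
      ((List.range m).flatMap (fun k => periodicSeg u.toFinset.card (u.toFinset.card * k) L))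
      (Set.Icc 1 (u.toFinset.card * m)) := by
  set r := u.toFinset.card
  have : NeZero r := ⟨by omega⟩
  have hu : 2 ≤ u.length := by have := toFinset_card_le u; omega
  have hrL : r ≤ L := Nat.lt_succ_iff.mp (period_lt_of_containsCopy_periodicSeg hu hfirst hmax)
  show Saturated u (periodicBlocks r L m) _
  refine ⟨sparse_periodicBlocks m, not_containsCopy_periodicBlocks hirr havoid m,
    fun _ => mem_Icc_of_mem_periodicBlocks, ?_⟩
  rintro x ⟨hx₁, hxm⟩ i hi
  obtain ⟨k, e, hk, he, rfl⟩ : ∃ k e, k < m ∧ e < r ∧ x = r * k + e + 1 := by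
    have := Nat.div_add_mod (x - 1) r
    refine ⟨(x - 1) / r, (x - 1) % r, Nat.div_lt_of_lt_mul ?_, Nat.mod_lt _ (by omega), by omega⟩
    omega
  obtain ⟨rest, hs⟩ := exists_periodicBlocks_eq_append (L := L) hk
  rw [hs] at hi ⊢
  rcases le_or_gt i (periodicBlocks r L k).length with hi₁ | hi₁
  · exact .inr ((containsCopy_cons_periodicSeg hu hfirst hmax (r * k) he).of_sublist
      (cons_sublist_insertIdx_append_append hi₁ _ _ _))
  obtain ⟨t, rfl⟩ := Nat.exists_eq_add_of_le hi₁.le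
  rcases lt_or_ge t L with ht | ht
  · refine .inl fun hsp => not_sparse_insertIdx_periodicSeg (by omega) hrL (by omega) ht (r * k) he ?_
    rw [insertIdx_append_append (by simpa using ht.le)] at hsp
    exact hsp.infix (infix_append _ _ _)
  · exact .inr ((containsCopy_periodicSeg_append hu hlast hmax (r * k) he).of_sublist
      (append_singleton_sublist_insertIdx_append (by simpa using ht) hi _))

theorem stmt5 {α : Type*} [DecidableEq α] (u : List α)
    (hr : 3 ≤ u.toFinset.card)
    (hfirst : u[0]? = u[1]?)
    (hlast : u[u.length - 1]? = u[u.length - 2]?)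
    (hirr : IrreducibleSeq u)
    (L : ℕ)
    (havoid : ¬ ContainsCopy (periodicSeg u.toFinset.card 0 L) u)
    (hmax : ContainsCopy (periodicSeg u.toFinset.card 0 (L + 1)) u)
    (m : ℕ) (hm : 1 ≤ m) :
    Saturated u
      ((List.range m).flatMap (fun k => periodicSeg u.toFinset.card (u.toFinset.card * k) L))
      (Set.Icc 1 (u.toFinset.card * m)) :=
  stmt5_general u hr hfirst hlast hirr L havoid hmax m
end

section
/- Let u be a strongly irreducible sequence with exactly r ≥ 2 distinct letters in which every letter of u occurs more than once. Then there exists a doubly infinite sequence s : ℤ → A over the alphabet A = {a_1,…,a_{r−1}} ⊔ ℤ (the disjoint union of an (r−1)-element set with a countably infinite set) that is u-saturated. -/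
/-- A doubly infinite sequence is `r`-sparse if any `r` consecutive terms are pairwise
distinct. -/
def SparseZ {A : Type*} (r : ℕ) (s : ℤ → A) : Prop :=
  ∀ i j : ℤ, i < j → j < i + r → s i ≠ s j

/-- A doubly infinite sequence `s` contains a copy of `u` if the terms of `s` along some
finite strictly increasing sequence of indices form a sequence isomorphic to `u`. -/
def ContainsCopyZ {α A : Type*} (s : ℤ → A) (u : List α) : Prop :=
  ∃ ix : List ℤ, ix.Pairwise (· < ·) ∧ IsCopy (ix.map s) u

/-- The doubly infinite sequence obtained from `s` by inserting the letter `x` between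
positions `m` and `m+1`. -/
def insertZ {A : Type*} (s : ℤ → A) (m : ℤ) (x : A) : ℤ → A :=
  fun i => if i ≤ m then s i else if i = m + 1 then x else s (i - 1)

/-- A doubly infinite sequence `s` over `alphabet` is `u`-saturated. -/
def SaturatedZ {α A : Type*} [DecidableEq α] (u : List α) (s : ℤ → A) (alphabet : Set A) :
    Prop :=
  SparseZ u.toFinset.card s ∧ ¬ ContainsCopyZ s u ∧ (∀ i, s i ∈ alphabet) ∧
  ∀ x ∈ alphabet, ∀ m : ℤ,
    ¬ SparseZ u.toFinset.card (insertZ s m x) ∨ ContainsCopyZ (insertZ s m x) u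

/-- `u` is strongly irreducible: for any two distinct letters `a, b` of `u`, it is not the
case that every occurrence of `a` precedes every occurrence of `b`. -/
def StronglyIrreducibleSeq {α : Type*} (u : List α) : Prop :=
  ∀ a ∈ u, ∀ b ∈ u, a ≠ b →
    ¬ ∀ (i j : ℕ) (hi : i < u.length) (hj : j < u.length),
        u.get ⟨i, hi⟩ = a → u.get ⟨j, hj⟩ = b → i < j


/-!
Write `r = n + 1` and let `clusterSeq n N` repeat the blocks `0 1 … (n-1) ★`, the stars carrying
integer labels that are constant on clusters of `N` consecutive blocks. Such a sequence is
`r`-sparse, and any insertion except that of a star far from its own cluster breaks sparsity.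
A copy of `u` must use a star (pigeonhole on the `r` letters), and only one star label, because
stars with different labels occur in order while `u` is strongly irreducible. Since every letter
of `u` repeats, clusters of size one avoid `u`, while clusters of size `|u|` contain it; so some `N`
has `clusterSeq n N` avoiding `u` and `clusterSeq n (N + 1)` containing it. A copy in the latter
lives in a single cluster of `N + 1` stars, and a star inserted far from a cluster of
`clusterSeq n N` supplies the missing one, so every sparsity-preserving insertion creates a copy.
-/

open Function

section Copies

variable {α β γ : Type*}

theorem IsCopy.map {v : List β} {u : List α} (h : IsCopy v u) {σ : β → γ} (hσ : Injective σ) :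
    IsCopy (v.map σ) u := by
  obtain ⟨f, hf, rfl⟩ := h
  exact ⟨σ ∘ f, fun x hx y hy hxy => hf x hx y hy (hσ hxy), List.map_map⟩

theorem IsCopy.card_toFinset [DecidableEq α] [DecidableEq β] {v : List β} {u : List α}
    (h : IsCopy v u) : v.toFinset.card = u.toFinset.card := by
  obtain ⟨f, hf, rfl⟩ := h
  have himage : (u.map f).toFinset = u.toFinset.image f := by ext; simp
  rw [himage, Finset.card_image_of_injOn]
  intro x hx y hy
  exact hf x (by simpa using hx) y (by simpa using hy)

theorem StronglyIrreducibleSeq.of_isCopy {v : List β} {u : List α}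
    (hu : StronglyIrreducibleSeq u) (h : IsCopy v u) : StronglyIrreducibleSeq v := by
  obtain ⟨f, -, rfl⟩ := h
  intro x hx y hy hxy hlt
  obtain ⟨a, ha, rfl⟩ := List.mem_map.mp hx
  obtain ⟨b, hb, rfl⟩ := List.mem_map.mp hy
  refine hu a ha b hb (fun hab => hxy (congrArg f hab)) fun i j hi hj hia hjb => ?_
  exact hlt i j (by simpa using hi) (by simpa using hj) (by simpa using congrArg f hia)
    (by simpa using congrArg f hjb)

theorem ContainsCopyZ.of_map {s : ℤ → β} {t : ℤ → γ} {u : List α} {ix : List ℤ}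
    (hix : ix.Pairwise (· < ·)) (hcopy : IsCopy (ix.map s) u) {σ : β → γ} (hσ : Injective σ)
    {φ : ℤ → ℤ} (hφ : StrictMono φ) (hval : ∀ p ∈ ix, t (φ p) = σ (s p)) :
    ContainsCopyZ t u := by
  refine ⟨ix.map φ, hix.map φ fun _ _ h => hφ h, ?_⟩
  have hmap : (ix.map φ).map t = (ix.map s).map σ := by
    simp only [List.map_map]
    exact List.map_congr_left hval
  exact hmap ▸ hcopy.map hσ

end Copies

theorem exists_inr_mem_of_lt_card {n : ℕ} {w : List (Fin n ⊕ ℤ)} (hw : n < w.toFinset.card) :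
    ∃ k, Sum.inr k ∈ w := by
  by_contra! h
  have hsub : w.toFinset ⊆ Finset.univ.map Embedding.inl := by
    intro x hx
    cases x with
    | inl t => simp
    | inr k => exact absurd (List.mem_toFinset.mp hx) (h k)
  have := Finset.card_le_card hsub
  simp only [Finset.card_map, Finset.card_univ, Fintype.card_fin] at this
  omega

theorem StronglyIrreducibleSeq.inr_eq_of_mem_map {n : ℕ} {s : ℤ → Fin n ⊕ ℤ} {ix : List ℤ}
    (hsi : StronglyIrreducibleSeq (ix.map s))
    (hs : ∀ {p p' k k'}, s p = .inr k → s p' = .inr k' → k < k' → p < p')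
    (hix : ix.Pairwise (· < ·)) {k k' : ℤ} (hk : .inr k ∈ ix.map s) (hk' : .inr k' ∈ ix.map s) :
    k = k' := by
  by_contra hne
  wlog hlt : k < k' generalizing k k'
  · exact this hk' hk (Ne.symm hne) (lt_of_le_of_ne (not_lt.mp hlt) (Ne.symm hne))
  refine hsi _ hk _ hk' (by simpa using hne) fun i j hi hj hik hjk => ?_
  simp only [List.get_eq_getElem, List.getElem_map, List.length_map] at hik hjk hi hj
  by_contra! hji
  have hle : ix[j] ≤ ix[i] := by
    rcases hji.lt_or_eq with hji | rfl
    · exact (List.pairwise_iff_getElem.mp hix j i hj hi hji).le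
    · rfl
  exact hle.not_gt (hs hik hjk hlt)

/-- Blocks `0, 1, …, n - 1, ★` of length `n + 1`, where the star of block `q` carries the label
`q / N`: the stars of `N` consecutive blocks form a cluster with a common label. -/
def clusterSeq (n N : ℕ) : ℤ → Fin n ⊕ ℤ := fun p =>
  if h : (p % (n + 1)).toNat < n then .inl ⟨_, h⟩ else .inr (p / (n + 1) / N)

section ClusterSeq

variable {n N : ℕ}

theorem clusterSeq_eq_inl_iff {p : ℤ} {t : Fin n} :
    clusterSeq n N p = .inl t ↔ p % (n + 1) = t := by
  have h0 : 0 ≤ p % (n + 1) := Int.emod_nonneg _ (by positivity)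
  have ht := t.isLt
  unfold clusterSeq
  split_ifs with h
  · simp only [Sum.inl.injEq, Fin.ext_iff]
    omega
  · simp only [false_iff]
    omega

theorem clusterSeq_eq_inr_iff_emod {p k : ℤ} :
    clusterSeq n N p = .inr k ↔ p % (n + 1) = n ∧ p / (n + 1) / N = k := by
  have h0 : 0 ≤ p % (n + 1) := Int.emod_nonneg _ (by positivity)
  have h1 : p % (n + 1) < n + 1 := Int.emod_lt_of_pos _ (by positivity)
  unfold clusterSeq
  split_ifs with h
  · simp only [false_iff]
    omega
  · simp only [Sum.inr.injEq]
    exact ⟨fun hk => ⟨by omega, hk⟩, And.right⟩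

theorem clusterSeq_eq_inr_iff (hN : 0 < N) {p k : ℤ} :
    clusterSeq n N p = .inr k ↔ ∃ j : ℤ, 0 ≤ j ∧ j < N ∧ p = (k * N + j) * (n + 1) + n := by
  have hn : (0 : ℤ) < n + 1 := by positivity
  have hN : (0 : ℤ) < N := by exact_mod_cast hN
  rw [clusterSeq_eq_inr_iff_emod]
  constructor
  · rintro ⟨hr, hq⟩
    refine ⟨p / (n + 1) % N, Int.emod_nonneg _ hN.ne', Int.emod_lt_of_pos _ hN, ?_⟩
    have e₁ := Int.mul_ediv_add_emod p (n + 1)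
    have e₂ := Int.mul_ediv_add_emod (p / (n + 1)) N
    rw [hr] at e₁
    rw [hq] at e₂
    linear_combination -e₁ - ((n : ℤ) + 1) * e₂
  · rintro ⟨j, hj₀, hjN, rfl⟩
    obtain ⟨hq, hr⟩ := (Int.ediv_emod_unique (a := (k * N + j) * (n + 1) + n) (q := k * N + j)
      (r := n) hn).mpr ⟨by ring, by positivity, by linarith⟩
    refine ⟨hr, ?_⟩
    rw [hq]
    exact ((Int.ediv_emod_unique hN).mpr ⟨by ring, hj₀, hjN⟩).1

theorem clusterSeq_mul_add (q : ℤ) (t : Fin n) : clusterSeq n N (q * (n + 1) + t) = .inl t := by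
  rw [clusterSeq_eq_inl_iff, add_comm, Int.add_mul_emod_self_right]
  exact Int.emod_eq_of_lt (by positivity) (by have := t.isLt; omega)

theorem clusterSeq_add_mul_of_inl {M : ℕ} {p : ℤ} {t : Fin n} (h : clusterSeq n N p = .inl t)
    (j : ℤ) : clusterSeq n M (p + j * (n + 1)) = .inl t := by
  rw [clusterSeq_eq_inl_iff] at h ⊢
  rwa [Int.add_mul_emod_self_right]

theorem exists_clusterSeq_eq_inl (t : Fin n) (a : ℤ) :
    ∃ p, a ≤ p ∧ p ≤ a + n ∧ clusterSeq n N p = .inl t := by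
  have h0 : 0 ≤ (t - a) % (n + 1) := Int.emod_nonneg _ (by positivity)
  have h1 : (t - a) % (n + 1) < n + 1 := Int.emod_lt_of_pos _ (by positivity)
  refine ⟨a + (t - a) % (n + 1), by omega, by omega, ?_⟩
  rw [clusterSeq_eq_inl_iff, Int.add_emod_emod, add_sub_cancel]
  exact Int.emod_eq_of_lt (by positivity) (by have := t.isLt; omega)

theorem clusterSeq_lt_of_inr_lt (hN : 0 < N) {p p' k k' : ℤ} (h : clusterSeq n N p = .inr k)
    (h' : clusterSeq n N p' = .inr k') (hk : k < k') : p < p' := by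
  obtain ⟨j, -, hjN, rfl⟩ := (clusterSeq_eq_inr_iff hN).mp h
  obtain ⟨j', hj', -, rfl⟩ := (clusterSeq_eq_inr_iff hN).mp h'
  have : k * N + j < k' * N + j' := by nlinarith
  nlinarith

theorem sparseZ_clusterSeq (n N : ℕ) : SparseZ (n + 1) (clusterSeq n N) := by
  intro p p' hlt hlt' heq
  have hmod : p % (n + 1) = p' % (n + 1) := by
    rcases h : clusterSeq n N p with t | k
    · rw [h] at heq
      rw [clusterSeq_eq_inl_iff.mp h, clusterSeq_eq_inl_iff.mp heq.symm]
    · rw [h] at heq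
      rw [(clusterSeq_eq_inr_iff_emod.mp h).1, (clusterSeq_eq_inr_iff_emod.mp heq.symm).1]
  have := Int.le_of_dvd (by omega) (Int.ModEq.dvd hmod)
  push_cast at hlt'
  omega

end ClusterSeq

section Insertion

variable {A : Type*} {s : ℤ → A} {m i : ℤ} {x : A}

theorem insertZ_of_le (h : i ≤ m) : insertZ s m x i = s i := if_pos h

theorem insertZ_succ : insertZ s m x (m + 1) = x := by
  simp [insertZ]

theorem insertZ_of_ge (h : m + 2 ≤ i) : insertZ s m x i = s (i - 1) := by
  unfold insertZ
  rw [if_neg (by omega), if_neg (by omega)]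

theorem not_sparseZ_insertZ {r : ℕ} {p : ℤ} (hp : s p = x) (h₁ : m + 1 < p + r) (h₂ : p < m + r) :
    ¬ SparseZ r (insertZ s m x) := by
  intro hs
  by_cases hpm : p ≤ m
  · exact hs p (m + 1) (by omega) h₁ (by rw [insertZ_of_le hpm, insertZ_succ, hp])
  · refine hs (m + 1) (p + 1) (by omega) (by omega) ?_
    rw [insertZ_succ, insertZ_of_ge (by omega), add_sub_cancel_right, hp]

end Insertion

def pivotShift (P a c b : ℤ) (p : ℤ) : ℤ :=
  if p < P then p + a else if p = P then c else p + b

theorem strictMono_pivotShift {P a c b : ℤ} (ha : P + a ≤ c) (hb : c < P + 1 + b) :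
    StrictMono (pivotShift P a c b) := by
  intro p q hpq
  unfold pivotShift
  split_ifs <;> omega

/-- The copy is moved along `pivotShift P a (m + 1) b`: positions before the pivot `P` land
left of the insertion, `P` on the inserted letter, and the positions after `P` to its right. -/
theorem containsCopyZ_insertZ_of_pivot {α A B : Type*} {s' : ℤ → A} {s : ℤ → B} {σ : A → B}
    (hσ : Injective σ) {u : List α} {ix : List ℤ} (hix : ix.Pairwise (· < ·))
    (hcopy : IsCopy (ix.map s') u) {P a b m : ℤ} (ha : P + a ≤ m + 1) (hb : m + 1 < P + 1 + b)
    (hbelow : ∀ p ∈ ix, p < P → s (p + a) = σ (s' p))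
    (habove : ∀ p ∈ ix, P < p → s (p + b - 1) = σ (s' p)) :
    ContainsCopyZ (insertZ s m (σ (s' P))) u := by
  refine ContainsCopyZ.of_map hix hcopy hσ (strictMono_pivotShift ha hb) fun p hp => ?_
  rcases lt_trichotomy p P with hpP | rfl | hPp
  · rw [pivotShift, if_pos hpP, insertZ_of_le (by omega), hbelow p hp hpP]
  · rw [pivotShift, if_neg (lt_irrefl p), if_pos rfl, insertZ_succ]
  · rw [pivotShift, if_neg (by omega), if_neg (by omega), insertZ_of_ge (by omega),
      habove p hp hPp]

section ClusterInsertion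

variable {α : Type*} {n N : ℕ}

theorem not_sparseZ_insertZ_inl (t : Fin n) (m : ℤ) :
    ¬ SparseZ (n + 1) (insertZ (clusterSeq n N) m (.inl t)) := by
  obtain ⟨p, h₁, h₂, hp⟩ := exists_clusterSeq_eq_inl (N := N) t (m + 1 - n)
  have := t.pos
  exact not_sparseZ_insertZ hp (by push_cast; omega) (by push_cast; omega)

theorem not_sparseZ_insertZ_inr (hn : 0 < n) (hN : 0 < N) {k m : ℤ} (h₁ : k * N * (n + 1) ≤ m)
    (h₂ : m + 1 < (k * N + N) * (n + 1) + n) :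
    ¬ SparseZ (n + 1) (insertZ (clusterSeq n N) m (.inr k)) := by
  have hpos : (0 : ℤ) < n + 1 := by positivity
  set q := m / (n + 1)
  have hm := Int.mul_ediv_add_emod m (n + 1)
  have hr₀ : 0 ≤ m % (n + 1) := Int.emod_nonneg _ hpos.ne'
  have hr₁ : m % (n + 1) < n + 1 := Int.emod_lt_of_pos _ hpos
  have hq : k * N ≤ q := by
    by_contra! hq
    nlinarith
  -- the star of the block of `m`, or the last star of the cluster if that block lies beyond it
  by_cases hqN : q < k * N + N
  · refine not_sparseZ_insertZ (p := q * (n + 1) + n)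
      ((clusterSeq_eq_inr_iff hN).mpr ⟨q - k * N, by omega, by omega, by ring⟩)
      (by push_cast; nlinarith) (by push_cast; nlinarith)
  · refine not_sparseZ_insertZ (p := (k * N + (N - 1)) * (n + 1) + n)
      ((clusterSeq_eq_inr_iff hN).mpr ⟨N - 1, by omega, by omega, rfl⟩)
      (by push_cast; nlinarith) (by push_cast; nlinarith)

variable {u : List α} {ix : List ℤ} {k₀ : ℤ}

theorem containsCopyZ_insertZ_inr_right (hN : 0 < N) (hix : ix.Pairwise (· < ·))
    (hcopy : IsCopy (ix.map (clusterSeq n (N + 1))) u)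
    (hk₀ : ∀ k, .inr k ∈ ix.map (clusterSeq n (N + 1)) → k = k₀) {k m : ℤ}
    (hm : (k * N + N) * (n + 1) + n ≤ m + 1) :
    ContainsCopyZ (insertZ (clusterSeq n N) m (.inr k)) u := by
  set σ := Equiv.swap (.inr k₀ : Fin n ⊕ ℤ) (.inr k)
  have hσ (t : Fin n) : σ (.inl t) = .inl t := Equiv.swap_apply_of_ne_of_ne (by simp) (by simp)
  -- the first `N` stars of cluster `k₀` go to cluster `k`, its last star to the inserted letter
  set P : ℤ := (k₀ * (N + 1) + N) * (n + 1) + n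
  have hP : clusterSeq n (N + 1) P = .inr k₀ :=
    (clusterSeq_eq_inr_iff N.succ_pos).mpr ⟨N, by omega, by push_cast; omega, by push_cast; ring⟩
  have key := containsCopyZ_insertZ_of_pivot (s := clusterSeq n N) σ.injective hix hcopy
    (P := P) (m := m)
    (a := (k * N - k₀ * (N + 1)) * (n + 1)) (b := (m - P).toNat * (n + 1) + 1)
    (by linarith [show P + (k * N - k₀ * (N + 1)) * (n + 1) = (k * N + N) * (n + 1) + n by ring])
    (by nlinarith [Int.self_le_toNat (m - P)]) ?_ ?_
  · rwa [hP, Equiv.swap_apply_left] at key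
  · intro p hp hpP
    rcases h : clusterSeq n (N + 1) p with t | k'
    · rw [hσ]
      exact clusterSeq_add_mul_of_inl h _
    · obtain rfl := hk₀ k' (h ▸ List.mem_map_of_mem hp)
      obtain ⟨j, hj₀, -, rfl⟩ := (clusterSeq_eq_inr_iff N.succ_pos).mp h
      have hjN : j < N := by push_cast at hpP; nlinarith
      rw [Equiv.swap_apply_left]
      exact (clusterSeq_eq_inr_iff hN).mpr ⟨j, hj₀, hjN, by push_cast; ring⟩
  · intro p hp hPp
    rcases h : clusterSeq n (N + 1) p with t | k'
    · rw [hσ, add_sub_assoc, add_sub_cancel_right]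
      exact clusterSeq_add_mul_of_inl h _
    · obtain rfl := hk₀ k' (h ▸ List.mem_map_of_mem hp)
      obtain ⟨j, -, hjN, rfl⟩ := (clusterSeq_eq_inr_iff N.succ_pos).mp h
      push_cast at hjN hPp
      nlinarith

theorem containsCopyZ_insertZ_inr_left (hN : 0 < N) (hix : ix.Pairwise (· < ·))
    (hcopy : IsCopy (ix.map (clusterSeq n (N + 1))) u)
    (hk₀ : ∀ k, .inr k ∈ ix.map (clusterSeq n (N + 1)) → k = k₀) {k m : ℤ}
    (hm : m + 1 ≤ k * N * (n + 1)) :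
    ContainsCopyZ (insertZ (clusterSeq n N) m (.inr k)) u := by
  set σ := Equiv.swap (.inr k₀ : Fin n ⊕ ℤ) (.inr k)
  have hσ (t : Fin n) : σ (.inl t) = .inl t := Equiv.swap_apply_of_ne_of_ne (by simp) (by simp)
  -- the first star of cluster `k₀` goes to the inserted letter, the other `N` to cluster `k`
  set P : ℤ := k₀ * (N + 1) * (n + 1) + n
  have hP : clusterSeq n (N + 1) P = .inr k₀ :=
    (clusterSeq_eq_inr_iff N.succ_pos).mpr ⟨0, le_rfl, by omega, by push_cast; ring⟩
  have key := containsCopyZ_insertZ_of_pivot (s := clusterSeq n N) σ.injective hix hcopy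
    (P := P) (m := m)
    (a := -(P - m).toNat * (n + 1)) (b := (k * N - k₀ * (N + 1) - 1) * (n + 1) + 1)
    (by nlinarith [Int.self_le_toNat (P - m)])
    (by linarith [show P + 1 + ((k * N - k₀ * (N + 1) - 1) * (n + 1) + 1) = k * N * (n + 1) + 1
      by ring]) ?_ ?_
  · rwa [hP, Equiv.swap_apply_left] at key
  · intro p hp hpP
    rcases h : clusterSeq n (N + 1) p with t | k'
    · rw [hσ]
      exact clusterSeq_add_mul_of_inl h _
    · obtain rfl := hk₀ k' (h ▸ List.mem_map_of_mem hp)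
      obtain ⟨j, hj₀, -, rfl⟩ := (clusterSeq_eq_inr_iff N.succ_pos).mp h
      push_cast at hpP
      nlinarith
  · intro p hp hPp
    rcases h : clusterSeq n (N + 1) p with t | k'
    · rw [hσ, add_sub_assoc, add_sub_cancel_right]
      exact clusterSeq_add_mul_of_inl h _
    · obtain rfl := hk₀ k' (h ▸ List.mem_map_of_mem hp)
      obtain ⟨j, -, hjN, rfl⟩ := (clusterSeq_eq_inr_iff N.succ_pos).mp h
      have hj : 0 < j := by push_cast at hPp; nlinarith
      rw [Equiv.swap_apply_left, add_sub_assoc, add_sub_cancel_right]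
      exact (clusterSeq_eq_inr_iff hN).mpr ⟨j - 1, by omega, by push_cast at hjN; omega,
        by push_cast; ring⟩

theorem containsCopyZ_insertZ_of_far (hN : 0 < N) (hsi : StronglyIrreducibleSeq u)
    (hcopy : ContainsCopyZ (clusterSeq n (N + 1)) u) {k m : ℤ}
    (hfar : (k * N + N) * (n + 1) + n ≤ m + 1 ∨ m + 1 ≤ k * N * (n + 1)) :
    ContainsCopyZ (insertZ (clusterSeq n N) m (.inr k)) u := by
  obtain ⟨ix, hix, hcopy⟩ := hcopy
  have hsi' := hsi.of_isCopy hcopy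
  obtain ⟨k₀, hk₀⟩ : ∃ k₀, ∀ k, .inr k ∈ ix.map (clusterSeq n (N + 1)) → k = k₀ := by
    by_cases hex : ∃ k₀, .inr k₀ ∈ ix.map (clusterSeq n (N + 1))
    · obtain ⟨k₀, hk₀⟩ := hex
      exact ⟨k₀, fun k hk => hsi'.inr_eq_of_mem_map (clusterSeq_lt_of_inr_lt N.succ_pos) hix hk hk₀⟩
    · exact ⟨0, fun k hk => absurd ⟨k, hk⟩ hex⟩
  exact hfar.elim (containsCopyZ_insertZ_inr_right hN hix hcopy hk₀)
    (containsCopyZ_insertZ_inr_left hN hix hcopy hk₀)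

theorem not_sparseZ_or_containsCopyZ_insertZ_inr (hn : 0 < n) (hN : 0 < N)
    (hsi : StronglyIrreducibleSeq u) (hcopy : ContainsCopyZ (clusterSeq n (N + 1)) u) (k m : ℤ) :
    ¬ SparseZ (n + 1) (insertZ (clusterSeq n N) m (.inr k)) ∨
      ContainsCopyZ (insertZ (clusterSeq n N) m (.inr k)) u := by
  by_cases hfar : (k * N + N) * (n + 1) + n ≤ m + 1 ∨ m + 1 ≤ k * N * (n + 1)
  · exact .inr (containsCopyZ_insertZ_of_far hN hsi hcopy hfar)
  · rw [not_or, not_le, not_le] at hfar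
    exact .inl (not_sparseZ_insertZ_inr hn hN (Int.lt_add_one_iff.mp hfar.2) hfar.1)

end ClusterInsertion

section Saturation

variable {α : Type*} [DecidableEq α] {n N : ℕ} {u : List α}

/-- A copy must send some letter `c` to a star; `c` occurs twice in `u`, but with clusters of
size one every star label occurs only once. -/
theorem not_containsCopyZ_clusterSeq_one (hcard : n < u.toFinset.card)
    (hocc : ∀ x ∈ u, 2 ≤ u.count x) : ¬ ContainsCopyZ (clusterSeq n 1) u := by
  rintro ⟨ix, hix, hcopy⟩
  obtain ⟨k, hk⟩ := exists_inr_mem_of_lt_card (hcopy.card_toFinset ▸ hcard)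
  obtain ⟨f, -, hmap⟩ := hcopy
  obtain ⟨c, hc, hck⟩ := List.mem_map.mp (hmap ▸ hk)
  have hstar : ∀ p, clusterSeq n 1 p = .inr k → p = k * (n + 1) + n := fun p hp => by
    obtain ⟨j, hj₀, hj₁, rfl⟩ := (clusterSeq_eq_inr_iff one_pos).mp hp
    obtain rfl : j = 0 := by push_cast at hj₁; omega
    simp
  have := calc
    2 ≤ u.count c := hocc c hc
    _ ≤ u.countP (fun a => f a = .inr k) := List.countP_mono_left fun a _ ha => by simp_all
    _ = ix.countP (fun p => clusterSeq n 1 p = .inr k) := by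
      simpa [List.countP_map, Function.comp_def] using
        (congrArg (List.countP (· = .inr k)) hmap).symm
    _ ≤ ix.count (k * (n + 1) + n) := List.countP_mono_left fun p _ hp => by
      simpa using hstar p (by simpa using hp)
    _ ≤ 1 := List.nodup_iff_count_le_one.mp (hix.imp ne_of_lt) _
  omega

theorem containsCopyZ_clusterSeq_of_length_le (hcard : u.toFinset.card = n + 1) {L : ℕ}
    (hL : u.length ≤ L) : ContainsCopyZ (clusterSeq n L) u := by
  obtain ⟨e⟩ : Nonempty (u.toFinset ↪ Fin n ⊕ Fin 1) :=
    Function.Embedding.nonempty_of_card_le (by rw [Fintype.card_coe, hcard]; simp)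
  let g : α → Fin n ⊕ Fin 1 := fun a => if h : a ∈ u.toFinset then e ⟨a, h⟩ else .inr 0
  let slot : Fin n ⊕ Fin 1 → ℤ := Sum.elim (fun t => t) (fun _ => n)
  let letter : Fin n ⊕ Fin 1 → Fin n ⊕ ℤ := Sum.map id (fun _ => 0)
  have hslot (x) : 0 ≤ slot x ∧ slot x ≤ n := by
    rcases x with t | _ <;> simp only [slot, Sum.elim_inl, Sum.elim_inr]
    · omega
    · omega
  have hval (i : ℕ) (hi : i < L) (x) : clusterSeq n L (i * (n + 1) + slot x) = letter x := by
    rcases x with t | _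
    · exact clusterSeq_mul_add i t
    · exact (clusterSeq_eq_inr_iff (by omega)).mpr ⟨i, by positivity, by omega, by simp [slot]⟩
  -- `u[i]` is read in block `i`, at the star (label `0`) for the one letter that `e` sends there
  refine ⟨List.ofFn fun i : Fin u.length => (i : ℤ) * (n + 1) + slot (g u[i]),
    List.pairwise_ofFn.mpr fun i j hij => ?_, letter ∘ g, fun a ha b hb hab => ?_, ?_⟩
  · have : (i : ℤ) + 1 ≤ j := by exact_mod_cast hij
    nlinarith [hslot (g u[i]), hslot (g u[j])]
  · have hinj : Injective letter :=
      Sum.map_injective.mpr ⟨injective_id, fun _ _ _ => Subsingleton.elim _ _⟩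
    have := hinj hab
    simp only [g, List.mem_toFinset.mpr ha, List.mem_toFinset.mpr hb, dite_true] at this
    exact congrArg Subtype.val (e.injective this)
  · rw [List.map_ofFn, ← List.ofFn_getElem_eq_map]
    exact congrArg List.ofFn (funext fun i => hval i (by omega) _)

theorem exists_saturatedZ_clusterSeq (hn : 0 < n) (hcard : u.toFinset.card = n + 1)
    (hocc : ∀ x ∈ u, 2 ≤ u.count x) (hsi : StronglyIrreducibleSeq u) :
    ∃ N, SaturatedZ u (clusterSeq n N) Set.univ := by
  obtain ⟨N, hN, hN'⟩ := Nat.exists_not_and_succ_of_not_zero_of_exists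
    (p := fun N => ContainsCopyZ (clusterSeq n (N + 1)) u)
    (not_containsCopyZ_clusterSeq_one (by omega) hocc)
    ⟨u.length, containsCopyZ_clusterSeq_of_length_le hcard (by omega)⟩
  refine ⟨N + 1, hcard ▸ sparseZ_clusterSeq n _, hN, fun _ => trivial, ?_⟩
  rintro (t | k) - m
  · exact .inl (hcard ▸ not_sparseZ_insertZ_inl t m)
  · exact hcard ▸ not_sparseZ_or_containsCopyZ_insertZ_inr hn N.succ_pos hsi hN' k m

end Saturation

theorem stmt7 {α : Type*} [DecidableEq α] (u : List α)
    (hr : 2 ≤ u.toFinset.card)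
    (hocc : ∀ x ∈ u, 2 ≤ u.count x)
    (hsi : StronglyIrreducibleSeq u) :
    ∃ s : ℤ → (Fin (u.toFinset.card - 1) ⊕ ℤ), SaturatedZ u s Set.univ := by
  obtain ⟨N, hN⟩ := exists_saturatedZ_clusterSeq (n := u.toFinset.card - 1) (by omega) (by omega)
    hocc hsi
  exact ⟨_, hN⟩
end

section
/- Let u be a sequence with exactly r ≥ 2 distinct letters. Then s_r(u), the longest initial segment of the infinite periodic sequence a_1 a_2 ⋯ a_r a_1 a_2 ⋯ that avoids u, is a u-saturated sequence over the alphabet {a_1,…,a_r}. -/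
section Sparse

variable {A : Type*} {r : ℕ} {t : List A}

theorem Sparse.getElem_ne (hs : Sparse r t) {i j : ℕ} (hij : i < j) (hj : j < t.length)
    (hjr : j < i + r) : t[i] ≠ t[j] :=
  hs i j hij hj hjr

/-- Pigeonhole: the `r + 1` letters `t[k], …, t[k+r]` cannot be pairwise distinct, and
sparsity leaves `t[k] = t[k+r]` as the only possible repetition. -/
theorem Sparse.getElem_add_eq [Inhabited A] (hs : Sparse r t) {S : Finset A}
    (hS : ∀ x ∈ t, x ∈ S) (hcard : S.card ≤ r) {k : ℕ} (hk : k + r < t.length) :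
    t[k + r] = t[k] := by
  have hmaps : ∀ j ∈ Finset.range (r + 1), t.getD (k + j) default ∈ S := fun j hj => by
    rw [Finset.mem_range] at hj
    rw [List.getD_eq_getElem _ _ (by omega)]
    exact hS _ (List.getElem_mem _)
  obtain ⟨i, hi, j, hj, hne, heq⟩ := Finset.exists_ne_map_eq_of_card_lt_of_maps_to
    (by rw [Finset.card_range]; omega) hmaps
  rw [Finset.mem_range] at hi hj
  rw [List.getD_eq_getElem _ _ (by omega), List.getD_eq_getElem _ _ (by omega)] at heq
  have key : ∀ a b (_ : a < b) (_ : b < r + 1), t[k + a]'(by omega) = t[k + b]'(by omega) →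
      t[k + r] = t[k] := fun a b hab hb he => by
    by_cases hbr : k + b < k + a + r
    · exact absurd he (hs.getElem_ne (by omega) _ hbr)
    · obtain ⟨rfl, rfl⟩ : a = 0 ∧ r = b := by omega
      simpa using he.symm
  rcases Nat.lt_or_gt_of_ne hne with h | h
  · exact key i j h (by omega) heq
  · exact key j i h (by omega) heq.symm

theorem Sparse.getElem_eq_getElem_mod [Inhabited A] (hs : Sparse r t) {S : Finset A}
    (hS : ∀ x ∈ t, x ∈ S) (hcard : S.card ≤ r) (k : ℕ) (hk : k < t.length) :
    t[k] = t[k % r]'((Nat.mod_le k r).trans_lt hk) := by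
  rcases Nat.eq_zero_or_pos r with rfl | hr
  · simp
  induction k using Nat.strong_induction_on with
  | _ k ih =>
    rcases Nat.lt_or_ge k r with h | h
    · simp only [Nat.mod_eq_of_lt h]
    · obtain ⟨m, rfl⟩ := Nat.exists_eq_add_of_le' h
      rw [hs.getElem_add_eq hS hcard hk, ih m (by omega) (by omega)]
      simp

theorem Sparse.isCopy_periodicSeg [Inhabited A] (hr : 0 < r) (hs : Sparse r t) {S : Finset A}
    (hS : ∀ x ∈ t, x ∈ S) (hcard : S.card ≤ r) :
    IsCopy t (periodicSeg r 0 t.length) := by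
  refine ⟨fun j => t.getD (j - 1) default, ?_, ?_⟩
  · simp only [periodicSeg, List.mem_map, List.mem_range]
    rintro _ ⟨i, hi, rfl⟩ _ ⟨j, hj, rfl⟩ heq
    have hir := Nat.mod_lt i hr
    have hjr := Nat.mod_lt j hr
    have hi' := (Nat.mod_le i r).trans_lt hi
    have hj' := (Nat.mod_le j r).trans_lt hj
    simp only [zero_add, Nat.add_sub_cancel, List.getD_eq_getElem _ _ hi',
      List.getD_eq_getElem _ _ hj'] at heq ⊢
    by_contra hne
    rcases Nat.lt_or_gt_of_ne (Nat.add_right_cancel_iff.not.mp hne) with h | h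
    · exact hs.getElem_ne h hj' (by omega) heq
    · exact hs.getElem_ne h hi' (by omega) heq.symm
  · refine List.ext_getElem (by simp [periodicSeg]) fun k hk _ => ?_
    simp only [periodicSeg, List.getElem_map, List.getElem_range, zero_add, Nat.add_sub_cancel,
      List.getD_eq_getElem _ _ ((Nat.mod_le k r).trans_lt hk)]
    exact hs.getElem_eq_getElem_mod hS hcard k hk

end Sparse

theorem ContainsCopy.of_isCopy {α A B : Type*} {u : List α} {p : List A} {t : List B}
    (h : ContainsCopy p u) (ht : IsCopy t p) : ContainsCopy t u := by
  obtain ⟨f, hf, rfl⟩ := ht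
  obtain ⟨_, hv, g, hg, rfl⟩ := h
  refine ⟨(u.map g).map f, hv.map f, f ∘ g, fun x hx y hy he => ?_, by simp⟩
  exact hg x hx y hy (hf _ (hv.subset (List.mem_map_of_mem hx)) _
    (hv.subset (List.mem_map_of_mem hy)) he)

section periodicSeg

variable {r base len : ℕ}

@[simp]
theorem length_periodicSeg : (periodicSeg r base len).length = len := by
  simp [periodicSeg]

theorem mem_periodicSeg (hr : 0 < r) {x : ℕ} (hx : x ∈ periodicSeg r base len) :
    x ∈ Finset.Icc (base + 1) (base + r) := by
  simp only [periodicSeg, List.mem_map, List.mem_range] at hx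
  obtain ⟨k, -, rfl⟩ := hx
  have := Nat.mod_lt k hr
  simp only [Finset.mem_Icc]
  omega

theorem sparse_periodicSeg_s9 : Sparse r (periodicSeg r base len) := by
  intro i j hij hj hjr he
  simp only [periodicSeg, List.get_eq_getElem, List.getElem_map, List.getElem_range,
    Nat.add_right_cancel_iff, Nat.add_left_cancel_iff] at he
  have := Nat.le_of_dvd (by omega) ((Nat.modEq_iff_dvd' hij.le).mp he)
  omega

end periodicSeg

theorem stmt9 {α : Type*} [DecidableEq α] (u : List α)
    (hr : 2 ≤ u.toFinset.card) (L : ℕ)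
    -- `s_r(u)` is the periodic segment of length `L`: it avoids `u` and is longest such:
    (havoid : ¬ ContainsCopy (periodicSeg u.toFinset.card 0 L) u)
    (hmax : ContainsCopy (periodicSeg u.toFinset.card 0 (L + 1)) u) :
    Saturated u (periodicSeg u.toFinset.card 0 L) (Set.Icc 1 u.toFinset.card) := by
  set r := u.toFinset.card
  have hr0 : 0 < r := by omega
  have hletters : ∀ x ∈ periodicSeg r 0 L, x ∈ Finset.Icc 1 r := fun x hx => by
    simpa using mem_periodicSeg hr0 hx
  refine ⟨sparse_periodicSeg_s9, havoid, fun x hx => by simpa using hletters x hx, ?_⟩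
  intro x hx i hi
  rw [or_iff_not_imp_left, not_not]
  intro hs
  have hS : ∀ y ∈ (periodicSeg r 0 L).insertIdx i x, y ∈ Finset.Icc 1 r := fun y hy => by
    rcases (List.mem_insertIdx hi).mp hy with rfl | hy
    · simpa using hx
    · exact hletters y hy
  have hcopy := hs.isCopy_periodicSeg hr0 hS (by simp)
  rw [List.length_insertIdx_of_le_length hi, length_periodicSeg] at hcopy
  exact hmax.of_isCopy hcopy
end

section
/- Let u be a sequence with exactly r ≥ 2 distinct letters. Then Sat(r,u), the minimum length of a u-saturated sequence over an alphabet of exactly r letters, equals the length of s_r(u). -/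
/-- `Sat n u` is the minimum length of a `u`-saturated sequence over an alphabet of
`n` letters. -/
noncomputable def Sat {α : Type*} [DecidableEq α] (n : ℕ) (u : List α) : ℕ :=
  sInf {L | ∃ s : List (Fin n), Saturated u s Set.univ ∧ s.length = L}

/-! ### Auxiliary lemmas -/

/-! Over an alphabet of exactly `r` letters, any `r` consecutive letters of an `r`-sparse
sequence exhaust the alphabet, so the sequence is `r`-periodic and hence a copy of the periodic
segment of the same length. A letter missing from the last `r - 1` positions can always be
appended without breaking sparsity, so a sparse sequence of length `m` is saturated exactly when
the periodic segment of length `m` avoids `u` and that of length `m + 1` contains it. This pins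
`m` down to the length of `s_r(u)`, and the periodic sequence of that length is saturated. -/

section Copies

variable {ι α β γ : Type*}

theorem isCopy_map_map [Nonempty β] (l : List ι) (g : ι → β) (h : ι → γ)
    (hgh : ∀ a ∈ l, ∀ b ∈ l, g a = g b ↔ h a = h b) : IsCopy (l.map g) (l.map h) := by
  classical
  let f : γ → β := fun c => if hc : ∃ a ∈ l, h a = c then g hc.choose else Classical.arbitrary β
  have hf : ∀ a ∈ l, f (h a) = g a := fun a ha => by
    have hc : ∃ b ∈ l, h b = h a := ⟨a, ha, rfl⟩
    simp only [f, dif_pos hc]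
    exact (hgh _ hc.choose_spec.1 a ha).mpr hc.choose_spec.2
  refine ⟨f, ?_, ?_⟩
  · simp only [List.mem_map]
    rintro _ ⟨a, ha, rfl⟩ _ ⟨b, hb, rfl⟩ hab
    rw [hf a ha, hf b hb] at hab
    exact (hgh a ha b hb).mp hab
  · rw [List.map_map]
    exact List.map_congr_left fun a ha => (hf a ha).symm

theorem IsCopy.symm [Nonempty β] {t : List β} {s : List γ} (hc : IsCopy s t) :
    IsCopy t s := by
  obtain ⟨f, hf, rfl⟩ := hc
  simpa using isCopy_map_map t id f fun a ha b hb => ⟨congrArg f, hf a ha b hb⟩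

theorem ContainsCopy.of_isCopy_s10 {u : List α} {t : List β} {s : List γ}
    (h : ContainsCopy t u) (hc : IsCopy s t) : ContainsCopy s u := by
  obtain ⟨f, hf, rfl⟩ := hc
  obtain ⟨v, hv, g, hg, rfl⟩ := h
  refine ⟨(u.map g).map f, hv.map f, f ∘ g, fun x hx y hy hxy => ?_, by rw [List.map_map]⟩
  exact hg x hx y hy (hf _ (hv.subset (List.mem_map_of_mem hx)) _
    (hv.subset (List.mem_map_of_mem hy)) hxy)

theorem IsCopy.containsCopy_iff [Nonempty β] {u : List α} {s : List γ} {t : List β}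
    (hc : IsCopy s t) : ContainsCopy s u ↔ ContainsCopy t u :=
  ⟨fun h => h.of_isCopy_s10 hc.symm, fun h => h.of_isCopy_s10 hc⟩

theorem ContainsCopy.mono {u : List α} {s t : List β} (h : ContainsCopy s u)
    (hst : s.Sublist t) : ContainsCopy t u := by
  obtain ⟨v, hv, hc⟩ := h
  exact ⟨v, hv.trans hst, hc⟩

theorem containsCopy_nil [Nonempty β] (s : List β) : ContainsCopy s ([] : List α) :=
  ⟨[], List.nil_sublist s, Classical.arbitrary _, by simp, rfl⟩

end Copies

section Sparse

variable {r : ℕ}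

theorem Sparse.getElem_ne_s10 {A : Type*} {s : List A} (hs : Sparse r s) {i j : ℕ} (hij : i < j)
    (hj : j < s.length) (hji : j < i + r) : s[i] ≠ s[j] :=
  hs i j hij hj hji

theorem Sparse.append_singleton {A : Type*} {s : List A} (hs : Sparse r s) {x : A}
    (hx : x ∉ s.drop (s.length + 1 - r)) : Sparse r (s ++ [x]) := by
  intro i j hij hj hji
  simp only [List.get_eq_getElem, List.length_append, List.length_singleton] at hj ⊢
  rw [List.getElem_append_left (by omega)]
  rcases Nat.lt_or_ge j s.length with hjs | hjs
  · rw [List.getElem_append_left hjs]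
    exact hs.getElem_ne_s10 hij hjs hji
  · rw [List.getElem_concat_length (by omega)]
    intro hix
    exact hx (List.mem_drop_iff_getElem.mpr ⟨i - (s.length + 1 - r), by omega,
      by simp only [show s.length + 1 - r + (i - (s.length + 1 - r)) = i by omega, hix]⟩)

theorem Sparse.exists_append_singleton [NeZero r] {s : List (Fin r)} (hs : Sparse r s) :
    ∃ x : Fin r, Sparse r (s ++ [x]) := by
  classical
  have hcard : (s.drop (s.length + 1 - r)).toFinset.card < (Finset.univ : Finset (Fin r)).card :=
    calc _ ≤ (s.drop (s.length + 1 - r)).length := List.toFinset_card_le _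
      _ < r := by rw [List.length_drop]; have := NeZero.pos r; omega
      _ = _ := (Finset.card_fin r).symm
  obtain ⟨x, -, hx⟩ := Finset.exists_mem_notMem_of_card_lt_card hcard
  exact ⟨x, hs.append_singleton (by simpa using hx)⟩

theorem Sparse.getElem_add {s : List (Fin r)} (hs : Sparse r s) {i : ℕ}
    (hi : i + r < s.length) : s[i + r] = s[i] := by
  let w : Fin r → Fin r := fun k => s[i + k]
  have hw : Function.Injective w := by
    intro k l hkl
    by_contra hne
    rcases Nat.lt_or_gt_of_ne (Fin.val_ne_of_ne hne) with h | h
    · exact hs.getElem_ne_s10 (by omega) (by omega) (by omega) hkl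
    · exact hs.getElem_ne_s10 (by omega) (by omega) (by omega) hkl.symm
  obtain ⟨k, hk⟩ := Finite.injective_iff_surjective.mp hw s[i + r]
  obtain hk0 | hk0 := Nat.eq_zero_or_pos k
  · simpa [w, hk0] using hk.symm
  · exact absurd hk (hs.getElem_ne_s10 (by omega) hi (by omega))

theorem Sparse.getElem_mod {s : List (Fin r)} (hs : Sparse r s) {i : ℕ} (hi : i < s.length) :
    s[i] = s[i % r]'((Nat.mod_le i r).trans_lt hi) := by
  have hr : 0 < r := (s[i]).pos
  induction i using Nat.strong_induction_on with
  | _ i ih =>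
    rcases Nat.lt_or_ge i r with hir | hir
    · simp only [Nat.mod_eq_of_lt hir]
    · obtain ⟨k, rfl⟩ := Nat.exists_eq_add_of_le' hir
      rw [hs.getElem_add hi, ih k (by omega) (by omega)]
      simp only [Nat.add_mod_right]

theorem Sparse.getElem_eq_getElem_iff {s : List (Fin r)} (hs : Sparse r s) {i j : ℕ}
    (hi : i < s.length) (hj : j < s.length) : s[i] = s[j] ↔ i % r = j % r := by
  have hr : 0 < r := (s[i]).pos
  refine ⟨fun h => ?_, fun h => by simp only [hs.getElem_mod hi, hs.getElem_mod hj, h]⟩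
  rw [hs.getElem_mod hi, hs.getElem_mod hj] at h
  have := Nat.mod_lt i hr
  have := Nat.mod_lt j hr
  by_contra hne
  rcases Nat.lt_or_gt_of_ne hne with hlt | hlt
  · exact hs.getElem_ne_s10 hlt ((Nat.mod_le j r).trans_lt hj) (by omega) h
  · exact hs.getElem_ne_s10 hlt ((Nat.mod_le i r).trans_lt hi) (by omega) h.symm

end Sparse

section Periodic

variable {α : Type*} {r : ℕ}

theorem periodicSeg_sublist (r base : ℕ) {k l : ℕ} (hkl : k ≤ l) :
    (periodicSeg r base k).Sublist (periodicSeg r base l) :=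
  (List.range_sublist.mpr hkl).map _

theorem eq_of_periodicSeg_thresholds {u : List α} {k l : ℕ}
    (hk : ¬ ContainsCopy (periodicSeg r 0 k) u) (hk' : ContainsCopy (periodicSeg r 0 (k + 1)) u)
    (hl : ¬ ContainsCopy (periodicSeg r 0 l) u) (hl' : ContainsCopy (periodicSeg r 0 (l + 1)) u) :
    k = l := by
  by_contra hne
  rcases Nat.lt_or_gt_of_ne hne with hlt | hlt
  · exact hl (hk'.mono (periodicSeg_sublist r 0 hlt))
  · exact hk (hl'.mono (periodicSeg_sublist r 0 hlt))

variable [NeZero r]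

theorem sparse_map_ofNat_range (l : ℕ) :
    Sparse r ((List.range l).map (Fin.ofNat r)) := by
  intro i j hij hj hji hEq
  simp only [List.get_eq_getElem, List.getElem_map, List.getElem_range] at hEq
  have hdvd : r ∣ j - i := (Nat.modEq_iff_dvd' hij.le).mp (by simpa [Nat.ModEq] using congrArg Fin.val hEq)
  have := Nat.le_of_dvd (by omega) hdvd
  omega

theorem Sparse.isCopy_periodicSeg_s10 {s : List (Fin r)} (hs : Sparse r s) :
    IsCopy s (periodicSeg r 0 s.length) := by
  have hseg : periodicSeg r 0 s.length =
      (List.finRange s.length).map fun i : Fin s.length => 0 + (i : ℕ) % r + 1 := by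
    rw [periodicSeg, ← List.map_coe_finRange_eq_range, List.map_map]
    rfl
  rw [hseg]
  conv_lhs => rw [← List.map_getElem_finRange s]
  refine isCopy_map_map _ _ _ fun i _ j _ => ?_
  rw [hs.getElem_eq_getElem_iff]
  omega

theorem Sparse.containsCopy_iff {s : List (Fin r)} (hs : Sparse r s) (u : List α) :
    ContainsCopy s u ↔ ContainsCopy (periodicSeg r 0 s.length) u :=
  hs.isCopy_periodicSeg_s10.containsCopy_iff

end Periodic

theorem saturated_univ_iff {α : Type*} [DecidableEq α] {u : List α} [NeZero u.toFinset.card]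
    {t : List (Fin u.toFinset.card)} :
    Saturated u t Set.univ ↔ Sparse u.toFinset.card t ∧
      ¬ ContainsCopy (periodicSeg u.toFinset.card 0 t.length) u ∧
      ContainsCopy (periodicSeg u.toFinset.card 0 (t.length + 1)) u := by
  constructor
  · rintro ⟨hs, havoid, -, hins⟩
    refine ⟨hs, (hs.containsCopy_iff u).not.mp havoid, ?_⟩
    obtain ⟨x, hx⟩ := hs.exists_append_singleton
    have hcopy := (hins x trivial t.length le_rfl).resolve_left
    rw [List.insertIdx_length_self] at hcopy
    simpa [hx.containsCopy_iff u] using hcopy (not_not.mpr hx)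
  · rintro ⟨hs, havoid, hmax⟩
    refine ⟨hs, (hs.containsCopy_iff u).not.mpr havoid, fun _ _ => trivial, fun x _ i hi => ?_⟩
    refine or_iff_not_imp_left.mpr fun hsp => ?_
    rw [(not_not.mp hsp).containsCopy_iff, List.length_insertIdx_of_le_length hi]
    exact hmax

theorem stmt10_general {α : Type*} [DecidableEq α] (u : List α)
    (L : ℕ)
    -- `s_r(u)` is the periodic segment of length `L`: it avoids `u` and is longest such:
    (havoid : ¬ ContainsCopy (periodicSeg u.toFinset.card 0 L) u)
    (hmax : ContainsCopy (periodicSeg u.toFinset.card 0 (L + 1)) u) :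
    Sat u.toFinset.card u = L := by
  have : NeZero u.toFinset.card := ⟨fun h0 => havoid <| by
    rw [Finset.card_eq_zero, List.toFinset_eq_empty_iff] at h0
    exact h0 ▸ containsCopy_nil _⟩
  have hlengths :
      {l | ∃ s : List (Fin u.toFinset.card), Saturated u s Set.univ ∧ s.length = l} = {L} := by
    ext l
    constructor
    · rintro ⟨t, ht, rfl⟩
      obtain ⟨-, ht, ht'⟩ := saturated_univ_iff.mp ht
      exact eq_of_periodicSeg_thresholds ht ht' havoid hmax
    · rintro rfl
      refine ⟨_, saturated_univ_iff.mpr ⟨sparse_map_ofNat_range l, ?_⟩, by simp⟩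
      simpa using ⟨havoid, hmax⟩
  rw [Sat, hlengths, csInf_singleton]

theorem stmt10 {α : Type*} [DecidableEq α] (u : List α)
    (hr : 2 ≤ u.toFinset.card) (L : ℕ)
    -- `s_r(u)` is the periodic segment of length `L`: it avoids `u` and is longest such:
    (havoid : ¬ ContainsCopy (periodicSeg u.toFinset.card 0 L) u)
    (hmax : ContainsCopy (periodicSeg u.toFinset.card 0 (L + 1)) u) :
    Sat u.toFinset.card u = L :=
  stmt10_general u L havoid hmax
end

section
/- Let u be a sequence of length at least 6 with exactly three distinct letters, whose first three letters a, b, c are pairwise distinct, and whose last three letters x, y, z satisfy xyz ∈ {abc, bca, cab}. Assume f_0(u) ≥ f_1(u) + 5. Then for every integer n ≥ 3, the sequence s[n] avoids u. -/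
/-- number of consecutive pairs of the form `ab`, `bc`, `ca` in `u`. -/
def f0 {α : Type*} [DecidableEq α] (u : List α) (a b c : α) : ℕ :=
  (u.zip u.tail).countP (fun p => decide (p = (a, b) ∨ p = (b, c) ∨ p = (c, a)))

/-- number of consecutive pairs of the form `ac`, `ba`, `cb` in `u`. -/
def f1 {α : Type*} [DecidableEq α] (u : List α) (a b c : α) : ℕ :=
  (u.zip u.tail).countP (fun p => decide (p = (a, c) ∨ p = (b, a) ∨ p = (c, b)))

/-- The initial segment of length `len` of the periodic sequence `p,q,z,p,q,z,…`. -/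
def seg3 {A : Type*} (p q z : A) (len : ℕ) : List A :=
  (List.range len).map (fun i => if i % 3 = 0 then p else if i % 3 = 1 then q else z)

/-- The recursively defined family `s[n]` over the alphabet `{1,…,n}`, where `L` is the
length of `s₃(u)`: `s[3]` is the copy of `s₃(u)` on `1,2,3`, and `s[n]` is `s[n-1]`
followed by the copy of `s₃(u)` on `x,y,n` with its first two letters removed, `x,y`
being the last two letters of `s[n-1]`. -/
def sFam (L : ℕ) : ℕ → List ℕ
  | 0 => []
  | 1 => []
  | 2 => []
  | 3 => seg3 1 2 3 L
  | (n + 4) =>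
      let prev := sFam L (n + 3)
      prev ++ (seg3 (prev.getD (prev.length - 2) 0) (prev.getD (prev.length - 1) 0)
        (n + 4) L).drop 2

/-
Code letters by residues mod 3. A code word `c₀ c₁ … cₖ` over `{0, 1, 2}` is a subsequence of the
segment of length `ℓ` of `c₀, c₀ + 1, c₀ + 2, …` (mod 3) iff `ℓ` exceeds its cost
`∑ stepCost cᵢ cᵢ₊₁`, where a step `c → c + 1` costs 1, `c → c + 2` costs 2 and `c → c` costs 3:
the greedy embedding is optimal. Under a bijective coding `{a, b, c} → {0, 1, 2}` the cost of `u` is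
`f₀ + 2f₁ + 3f₂` if the coding preserves the cyclic order of `a, b, c`, and `2f₀ + f₁ + 3f₂` if it
reverses it. With the coding `a, b, c ↦ 0, 1, 2` this gives `L ≤ f₀ + 2f₁ + 3f₂`.

By induction on `n`, `s[n] ++ t` avoids `u` whenever `t` uses only the last two letters of `s[n]`.
Now `s[n]` ends with a block: the segment of length `L` of the period on `x, y, n` with its first
`d` letters removed (`d = 2`, or `d = 0` for `n = 3`). A copy of `u` avoiding `n` lies in
`s[n-1] ++ t'` for such a `t'`. Otherwise some letter of `u` is sent to `n`; as the first three
letters of `u` are `a, b, c`, this happens at a position `j ≤ d` (take `j = 0` for `n = 3`), and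
from there on the copy lies in the block followed by `t`. The last three letters of `u` run through
`a, b, c`, so one of them is sent to the letter that would continue the period after the block; it
is not in `t`, so the copy up to it fits into the block shortened by two letters, and this middle
part of `u` costs less than `L - 2 - d`. The `j` steps before it and the at most two after it are
cyclic (`a → b → c → a`) and cost 1 each or 2 each, according to the orientation of the coding;
either way the cost of `u` is then too small for `L ≤ f₀ + 2f₁ + 3f₂` and `f₀ ≥ f₁ + 5`.
-/

theorem ContainsCopy.length_le {α β : Type*} {s : List β} {u : List α} (h : ContainsCopy s u) :
    u.length ≤ s.length := by
  obtain ⟨v, hv, f, -, rfl⟩ := h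
  simpa using hv.length_le

namespace SparseAvoid

open List

section Lists

variable {α β : Type*}

lemma cons_sublist_of_append_cons_sublist {l l' r₁ r₂ : List α} {x : α}
    (h : l ++ x :: l' <+ r₁ ++ r₂) (hx : x ∉ r₁) : x :: l' <+ r₂ := by
  obtain ⟨l₁, l₂, heq, h₁, h₂⟩ := sublist_append_iff.mp h
  rcases append_eq_append_iff.mp heq with ⟨as, rfl, has⟩ | ⟨bs, rfl, rfl⟩
  · cases as with
    | nil => simpa using has ▸ h₂
    | cons y as =>
      obtain ⟨rfl, -⟩ := cons_eq_cons.mp has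
      exact absurd (h₁.subset (by simp)) hx
  · exact (sublist_append_right bs _).trans h₂

lemma append_singleton_sublist_of_append_cons_sublist {l l' r₁ r₂ : List α} {x : α}
    (h : l ++ x :: l' <+ r₁ ++ r₂) (hx : x ∉ r₂) : l ++ [x] <+ r₁ := by
  rw [← reverse_sublist] at h ⊢
  simpa using cons_sublist_of_append_cons_sublist (by simpa using h) (by simpa using hx)

lemma exists_eq_append_cons_of_length_lt {P Q R S : List α} {y w : α}
    (h : P ++ y :: R = Q ++ w :: S) (hPQ : P.length < Q.length) : ∃ M, R = M ++ w :: S := by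
  rcases append_eq_append_iff.mp h with ⟨as, rfl, has⟩ | ⟨bs, rfl, -⟩
  · cases as with
    | nil => simp at hPQ
    | cons y' M => exact ⟨M, (cons_eq_cons.mp has).2⟩
  · simp at hPQ

lemma exists_eq_append_cons_of_take_eq {u l : List α} {k : ℕ} (h : u.take k = l) {w : α}
    (hw : w ∈ l) : ∃ P R, u = P ++ w :: R ∧ P ++ [w] <+: l := by
  obtain ⟨P, T, rfl⟩ := append_of_mem hw
  refine ⟨P, T ++ u.drop k, ?_, ⟨T, by simp⟩⟩
  conv_lhs => rw [← take_append_drop k u, h]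
  simp

lemma mem_of_mem_drop_of_eq_append {u P R : List α} (hu : u = P ++ R) {k : ℕ}
    (hk : P.length ≤ k) {w : α} (hw : w ∈ u.drop k) : w ∈ R := by
  rw [hu, drop_append, drop_eq_nil_of_le hk, nil_append] at hw
  exact mem_of_mem_drop hw

lemma sublist_append_filter {l s r : List α} (p : α → Bool) (h : l <+ s ++ r)
    (hl : ∀ x ∈ l, p x) (hs : ∀ x ∈ s, p x) : l <+ s ++ r.filter p := by
  simpa [filter_append, filter_eq_self.mpr hl, filter_eq_self.mpr hs] using h.filter p

lemma exists_mem_eq_of_injOn [DecidableEq α] {u : List α} {f : α → β} {T : Finset β}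
    (hinj : ∀ x ∈ u, ∀ y ∈ u, f x = f y → x = y) (hmaps : ∀ x ∈ u, f x ∈ T)
    (hcard : T.card ≤ u.toFinset.card) : ∀ m ∈ T, ∃ w ∈ u, f w = m := by
  intro m hm
  obtain ⟨w, hw, rfl⟩ := Finset.surj_on_of_inj_on_of_card_le (fun x _ => f x)
    (fun x hx => hmaps x (mem_toFinset.mp hx))
    (fun x y hx hy => hinj x (mem_toFinset.mp hx) y (mem_toFinset.mp hy)) hcard m hm
  exact ⟨w, mem_toFinset.mp hw, rfl⟩

end Lists

/-- Distance from position `j` to the next position `≡ c [MOD 3]`. -/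
def gap (j c : ℕ) : ℕ := (c + 3 - j % 3) % 3

def stepCost (c c' : ℕ) : ℕ := gap (c + 1) c' + 1

def cost : List ℕ → ℕ
  | c :: c' :: cs => stepCost c c' + cost (c' :: cs)
  | _ => 0

def periodicCodes (j len : ℕ) : List ℕ := (range' j len).map (· % 3)

lemma periodicCodes_succ (j len : ℕ) :
    periodicCodes j (len + 1) = j % 3 :: periodicCodes (j + 1) len := by
  simp [periodicCodes, range'_succ]

lemma stepCost_self (c : ℕ) : stepCost c c = 3 := by
  simp only [stepCost, gap]
  omega

lemma stepCost_of_distinct {g₀ g₁ g₂ : ℕ} (h₀ : g₀ < 3) (h₁ : g₁ < 3) (h₂ : g₂ < 3)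
    (h₀₁ : g₀ ≠ g₁) (h₀₂ : g₀ ≠ g₂) (h₁₂ : g₁ ≠ g₂) :
    (stepCost g₀ g₁ = 1 ∨ stepCost g₀ g₁ = 2) ∧
      stepCost g₁ g₂ = stepCost g₀ g₁ ∧ stepCost g₂ g₀ = stepCost g₀ g₁ ∧
      stepCost g₀ g₂ = 3 - stepCost g₀ g₁ ∧ stepCost g₁ g₀ = 3 - stepCost g₀ g₁ ∧
      stepCost g₂ g₁ = 3 - stepCost g₀ g₁ := by
  simp only [stepCost, gap]
  omega

lemma cost_cons_cons (c c' : ℕ) (cs : List ℕ) :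
    cost (c :: c' :: cs) = stepCost c c' + cost (c' :: cs) := rfl

lemma cost_append_cons (l l' : List ℕ) (x : ℕ) :
    cost (l ++ x :: l') = cost (l ++ [x]) + cost (x :: l') := by
  induction l with
  | nil => simp [cost]
  | cons c l ih =>
    cases l with
    | nil => simp [cost]
    | cons c' l =>
      simp only [cons_append, cost_cons_cons] at ih ⊢
      rw [ih]
      ring

lemma cost_append_cons_append_cons (l₁ l₂ l₃ : List ℕ) (x y : ℕ) :
    cost (l₁ ++ x :: (l₂ ++ y :: l₃)) =
      cost (l₁ ++ [x]) + cost (x :: l₂ ++ [y]) + cost (y :: l₃) := by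
  rw [cost_append_cons, show x :: (l₂ ++ y :: l₃) = (x :: l₂) ++ y :: l₃ from rfl,
    cost_append_cons (x :: l₂)]
  simp only [cons_append]
  ring

lemma gap_add_cost_lt_of_cons_sublist {c : ℕ} {cs : List ℕ} (hc : c < 3) {j len : ℕ}
    (h : c :: cs <+ periodicCodes j len) : gap j c + cost (c :: cs) < len := by
  induction len generalizing j c cs with
  | zero => simp [periodicCodes] at h
  | succ len ih =>
    rw [periodicCodes_succ, sublist_cons_iff] at h
    rcases h with h | ⟨r, ⟨rfl, rfl⟩, h⟩
    · have := ih hc h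
      unfold gap at *
      omega
    · cases cs with
      | nil => simp [gap, cost]
      | cons c' cs =>
        have hc' : c' < 3 := by
          have := h.subset mem_cons_self
          simp only [periodicCodes, mem_map] at this
          omega
        have := ih hc' h
        simp only [cost_cons_cons, stepCost, gap] at *
        omega

lemma cons_sublist_of_gap_add_cost_lt {c : ℕ} {cs : List ℕ} (hc : c < 3)
    (hcs : ∀ x ∈ cs, x < 3) {j len : ℕ} (h : gap j c + cost (c :: cs) < len) :
    c :: cs <+ periodicCodes j len := by
  induction len generalizing j c cs with
  | zero => omega
  | succ len ih =>
    rw [periodicCodes_succ]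
    by_cases hj : c = j % 3
    · subst hj
      refine Sublist.cons_cons _ ?_
      cases cs with
      | nil => exact nil_sublist _
      | cons c' cs =>
        refine ih (hcs c' mem_cons_self) (fun x hx => hcs x (mem_cons_of_mem _ hx)) ?_
        simp only [cost_cons_cons, stepCost, gap] at *
        omega
    · refine (ih hc hcs ?_).cons _
      unfold gap at *
      omega

theorem cons_sublist_periodicCodes_iff {c : ℕ} {cs : List ℕ} (hc : c < 3)
    (hcs : ∀ x ∈ cs, x < 3) {j len : ℕ} :
    c :: cs <+ periodicCodes j len ↔ gap j c + cost (c :: cs) < len :=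
  ⟨gap_add_cost_lt_of_cons_sublist hc, cons_sublist_of_gap_add_cost_lt hc hcs⟩

section Letters

variable {β : Type*}

def letter3 (p q z : β) (i : ℕ) : β := if i % 3 = 0 then p else if i % 3 = 1 then q else z

def code3 [DecidableEq β] (p q w : β) : ℕ := if w = p then 0 else if w = q then 1 else 2

lemma seg3_eq_map (p q z : β) (m : ℕ) : seg3 p q z m = (range m).map (letter3 p q z) := rfl

lemma length_seg3 (p q z : β) (m : ℕ) : (seg3 p q z m).length = m := by
  simp [seg3_eq_map]

lemma letter3_mod (p q z : β) (i : ℕ) : letter3 p q z (i % 3) = letter3 p q z i := by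
  simp [letter3]

lemma letter3_mem (p q z : β) (i : ℕ) : letter3 p q z i ∈ [p, q, z] := by
  unfold letter3
  split_ifs <;> simp

lemma mem_seg3 {p q z w : β} {m : ℕ} (h : w ∈ seg3 p q z m) : w ∈ [p, q, z] := by
  obtain ⟨i, -, rfl⟩ := mem_map.mp h
  exact letter3_mem p q z i

lemma seg3_add_two (p q z : β) (m : ℕ) :
    seg3 p q z (m + 2) = seg3 p q z m ++ [letter3 p q z m, letter3 p q z (m + 1)] := by
  simp [seg3_eq_map, range_succ]

lemma drop_seg3_add_two (p q z : β) (m d : ℕ) :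
    ∃ r, (seg3 p q z (m + 2)).drop d = (seg3 p q z m).drop d ++ r ∧
      ∀ x ∈ r, x = letter3 p q z m ∨ x = letter3 p q z (m + 1) := by
  rw [seg3_add_two, drop_append]
  exact ⟨_, rfl, fun x hx => by simpa using drop_subset _ _ hx⟩

lemma drop_seg3 (p q z : β) (m d : ℕ) :
    (seg3 p q z m).drop d = (range' d (m - d)).map (letter3 p q z) := by
  rw [seg3_eq_map, ← map_drop, range_eq_range', drop_range']
  simp

variable [DecidableEq β] {p q z : β}

lemma code3_lt (w : β) : code3 p q w < 3 := by
  unfold code3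
  split_ifs <;> omega

lemma code3_letter3 (hpq : p ≠ q) (hpz : p ≠ z) (hqz : q ≠ z) (i : ℕ) :
    code3 p q (letter3 p q z i) = i % 3 := by
  unfold letter3 code3
  split_ifs <;> simp_all
  omega

lemma letter3_ne (hpq : p ≠ q) (hpz : p ≠ z) (hqz : q ≠ z) {i j : ℕ} (h : i % 3 ≠ j % 3) :
    letter3 p q z i ≠ letter3 p q z j := fun he =>
  h (by rw [← code3_letter3 hpq hpz hqz, he, code3_letter3 hpq hpz hqz])

lemma code3_injOn (hpq : p ≠ q) (hpz : p ≠ z) (hqz : q ≠ z) {x y : β} (hx : x ∈ [p, q, z])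
    (hy : y ∈ [p, q, z]) (h : code3 p q x = code3 p q y) : x = y := by
  simp only [mem_cons, not_mem_nil, or_false] at hx hy
  rcases hx with rfl | rfl | rfl <;> rcases hy with rfl | rfl | rfl <;>
    simp_all [code3, Ne.symm]

theorem cost_map_code3_add_lt (hpq : p ≠ q) (hpz : p ≠ z) (hqz : q ≠ z) {l : List β}
    (hl : l ≠ []) {m d : ℕ} (h : l <+ (seg3 p q z m).drop d) :
    cost (l.map (code3 p q)) + d < m := by
  obtain ⟨w, l, rfl⟩ := exists_cons_of_ne_nil hl
  have hcodes : (w :: l).map (code3 p q) <+ periodicCodes d (m - d) := by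
    have := h.map (code3 p q)
    rwa [drop_seg3, map_map, Function.comp_def,
      map_congr_left fun i _ => code3_letter3 hpq hpz hqz i] at this
  rw [map_cons, cons_sublist_periodicCodes_iff (code3_lt w) (by simp [code3_lt])] at hcodes
  rw [map_cons]
  omega

end Letters

section Cost

variable {α : Type*} {a b c : α}

lemma cost_map_of_isChain {γ : α → ℕ} {A : ℕ} :
    ∀ {l : List α}, l.IsChain (fun x y => stepCost (γ x) (γ y) = A) →
      cost (l.map γ) = A * (l.length - 1)
  | [], _ | [_], _ => by simp [cost]
  | x :: y :: l, h => by
    rw [isChain_cons_cons] at h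
    rw [map_cons, map_cons, cost_cons_cons, ← map_cons, cost_map_of_isChain h.2, h.1]
    simp only [length_cons, Nat.add_sub_cancel]
    ring

lemma stepCost_map_of_injOn (hab : a ≠ b) (hac : a ≠ c) (hbc : b ≠ c) {γ : α → ℕ}
    (hγ : ∀ x ∈ [a, b, c], γ x < 3)
    (hγinj : ∀ x ∈ [a, b, c], ∀ y ∈ [a, b, c], γ x = γ y → x = y) :
    (stepCost (γ a) (γ b) = 1 ∨ stepCost (γ a) (γ b) = 2) ∧
      stepCost (γ b) (γ c) = stepCost (γ a) (γ b) ∧ stepCost (γ c) (γ a) = stepCost (γ a) (γ b) ∧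
      stepCost (γ a) (γ c) = 3 - stepCost (γ a) (γ b) ∧
      stepCost (γ b) (γ a) = 3 - stepCost (γ a) (γ b) ∧
      stepCost (γ c) (γ b) = 3 - stepCost (γ a) (γ b) :=
  stepCost_of_distinct (hγ a (by simp)) (hγ b (by simp)) (hγ c (by simp))
    (fun h => hab (hγinj a (by simp) b (by simp) h))
    (fun h => hac (hγinj a (by simp) c (by simp) h))
    (fun h => hbc (hγinj b (by simp) c (by simp) h))

variable [DecidableEq α]

def f2 (u : List α) : ℕ := (u.zip u.tail).countP (fun p => decide (p.1 = p.2))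

theorem cost_map_eq (hab : a ≠ b) (hac : a ≠ c) (hbc : b ≠ c) {γ : α → ℕ}
    (hγ : ∀ x ∈ [a, b, c], γ x < 3)
    (hγinj : ∀ x ∈ [a, b, c], ∀ y ∈ [a, b, c], γ x = γ y → x = y) :
    ∀ v : List α, (∀ w ∈ v, w ∈ [a, b, c]) →
      cost (v.map γ) = stepCost (γ a) (γ b) * f0 v a b c +
        (3 - stepCost (γ a) (γ b)) * f1 v a b c + 3 * f2 v
  | [], _ | [_], _ => by simp [cost, f0, f1, f2]
  | x :: y :: r, hv => by
    have hrec := cost_map_eq hab hac hbc hγ hγinj (y :: r) fun w hw => hv w (mem_cons_of_mem _ hw)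
    have habc := stepCost_map_of_injOn hab hac hbc hγ hγinj
    have hx := hv x (by simp)
    have hy := hv y (by simp)
    simp only [mem_cons, not_mem_nil, or_false] at hx hy
    rw [map_cons, map_cons, cost_cons_cons, ← map_cons, hrec]
    simp only [f0, f1, f2, tail_cons, zip_cons_cons, countP_cons]
    rcases hx with rfl | rfl | rfl <;> rcases hy with rfl | rfl | rfl <;>
      simp [hab, hac, hbc, hab.symm, hac.symm, hbc.symm, stepCost_self, habc] <;> ring

end Cost

section Pattern

variable {α : Type*} {u : List α} {a b c : α}

lemma isChain_drop_length_sub_three {R : α → α → Prop} (hab : R a b) (hbc : R b c) (hca : R c a)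
    (hlast : u.drop (u.length - 3) = [a, b, c] ∨ u.drop (u.length - 3) = [b, c, a] ∨
      u.drop (u.length - 3) = [c, a, b]) :
    (u.drop (u.length - 3)).IsChain R := by
  rcases hlast with h | h | h <;> rw [h] <;> simp [hab, hbc, hca]

variable [DecidableEq α]

lemma mem_of_toFinset_eq (hletters : u.toFinset = {a, b, c}) {w : α} (hw : w ∈ u) :
    w ∈ [a, b, c] := by
  rw [← mem_toFinset, hletters] at hw
  simpa using hw

lemma mem_drop_length_sub_three (hletters : u.toFinset = {a, b, c})
    (hlast : u.drop (u.length - 3) = [a, b, c] ∨ u.drop (u.length - 3) = [b, c, a] ∨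
      u.drop (u.length - 3) = [c, a, b]) {w : α} (hw : w ∈ u) :
    w ∈ u.drop (u.length - 3) := by
  have := mem_of_toFinset_eq hletters hw
  simp only [mem_cons, not_mem_nil, or_false] at this
  rcases hlast with h | h | h <;> rw [h] <;> simp only [mem_cons, not_mem_nil, or_false] <;> tauto

theorem le_weight_of_not_containsCopy (hab : a ≠ b) (hac : a ≠ c) (hbc : b ≠ c)
    (hletters : u.toFinset = {a, b, c}) (hfirst : u.take 3 = [a, b, c]) {L : ℕ}
    (havoid : ¬ ContainsCopy (seg3 1 2 3 L) u) :
    L ≤ f0 u a b c + 2 * f1 u a b c + 3 * f2 u := by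
  by_contra! hL
  apply havoid
  have hcost := cost_map_eq hab hac hbc (fun x _ => code3_lt x)
    (fun x hx y hy => code3_injOn hab hac hbc hx hy) u fun w hw => mem_of_toFinset_eq hletters hw
  have hu : u = a :: u.tail := by
    rw [← take_append_drop 3 u, hfirst]
    rfl
  have hcodes : u.map (code3 a b) <+ periodicCodes 0 L := by
    rw [hu, map_cons, cons_sublist_periodicCodes_iff (code3_lt a)
      (forall_mem_map.mpr fun x _ => code3_lt x), ← map_cons, ← hu, hcost]
    simp [code3, stepCost, gap, hab.symm]
    omega
  refine ⟨u.map (letter3 1 2 3 ∘ code3 a b), ?_, letter3 1 2 3 ∘ code3 a b, ?_, rfl⟩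
  · have hseg : seg3 1 2 3 L = (periodicCodes 0 L).map (letter3 1 2 3) := by
      simp [seg3_eq_map, periodicCodes, letter3_mod, range_eq_range']
    rw [← map_map, hseg]
    exact hcodes.map _
  · intro x hx y hy h
    have := congrArg (code3 1 2) h
    simp only [Function.comp_apply, code3_letter3 (by decide : (1 : ℕ) ≠ 2) (by decide)
      (by decide : (2 : ℕ) ≠ 3), Nat.mod_eq_of_lt (code3_lt _)] at this
    exact code3_injOn hab hac hbc (mem_of_toFinset_eq hletters hx)
      (mem_of_toFinset_eq hletters hy) this

theorem le_cost_map_middle (hab : a ≠ b) (hac : a ≠ c) (hbc : b ≠ c)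
    (hletters : u.toFinset = {a, b, c})
    (hlast : u.drop (u.length - 3) = [a, b, c] ∨ u.drop (u.length - 3) = [b, c, a] ∨
      u.drop (u.length - 3) = [c, a, b])
    (hf : f1 u a b c + 5 ≤ f0 u a b c) {L : ℕ} (hW : L ≤ f0 u a b c + 2 * f1 u a b c + 3 * f2 u)
    {γ : α → ℕ} (hγ : ∀ x ∈ [a, b, c], γ x < 3)
    (hγinj : ∀ x ∈ [a, b, c], ∀ y ∈ [a, b, c], γ x = γ y → x = y)
    {P M S : List α} {y w : α} (hu : u = P ++ y :: (M ++ w :: S))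
    (hprefix : P ++ [y] <+: [a, b, c]) (hsuffix : w :: S <:+ u.drop (u.length - 3)) :
    L ≤ cost ((y :: M ++ [w]).map γ) + P.length + 2 := by
  have hcost := cost_map_eq hab hac hbc hγ hγinj u fun x hx => mem_of_toFinset_eq hletters hx
  obtain ⟨hA, hbc', hca', -⟩ := stepCost_map_of_injOn hab hac hbc hγ hγinj
  set A := stepCost (γ a) (γ b)
  have habc : [a, b, c].IsChain fun x y => stepCost (γ x) (γ y) = A := by simp [A, hbc']
  have hfront : cost ((P ++ [y]).map γ) = A * P.length := by
    rw [cost_map_of_isChain (habc.infix hprefix.isInfix)]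
    simp
  have hback : cost ((w :: S).map γ) = A * S.length := by
    rw [cost_map_of_isChain ((isChain_drop_length_sub_three
      (R := fun x y => stepCost (γ x) (γ y) = A) rfl hbc' hca' hlast).infix hsuffix.isInfix)]
    simp
  have hP : P.length < 3 := by simpa using hprefix.length_le
  have hS : S.length < 3 := by
    have := hsuffix.length_le
    simp only [length_cons, length_drop] at this
    omega
  have hsplit : cost (u.map γ) =
      cost ((P ++ [y]).map γ) + cost ((y :: M ++ [w]).map γ) + cost ((w :: S).map γ) := by
    rw [hu]
    simpa using cost_append_cons_append_cons (P.map γ) (M.map γ) (S.map γ) (γ y) (γ w)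
  rw [hsplit, hfront, hback] at hcost
  rcases hA with h | h <;> rw [h] at hcost <;> omega

end Pattern

section Block

variable {β : Type*} {p q z : β} {L d : ℕ} {t : List β}

lemma mem_of_sublist_drop_seg3_append
    (ht : ∀ w ∈ t, w = letter3 p q z (L - 2) ∨ w = letter3 p q z (L - 1))
    {l : List β} (h : l <+ (seg3 p q z L).drop d ++ t) : ∀ x ∈ l, x ∈ [p, q, z] := by
  intro x hx
  rcases mem_append.mp (h.subset hx) with h | h
  · exact mem_seg3 (mem_of_mem_drop h)
  · rcases ht _ h with rfl | rfl <;> exact letter3_mem p q z _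

variable [DecidableEq β]

lemma cost_add_lt_of_append_cons_sublist (hpq : p ≠ q) (hpz : p ≠ z) (hqz : q ≠ z)
    (hL : 2 ≤ L) (ht : ∀ w ∈ t, w = letter3 p q z (L - 2) ∨ w = letter3 p q z (L - 1))
    {l l' : List β} (h : l ++ letter3 p q z L :: l' <+ (seg3 p q z L).drop d ++ t) :
    cost ((l ++ [letter3 p q z L]).map (code3 p q)) + d < L - 2 := by
  obtain ⟨r, hr, hrmem⟩ := drop_seg3_add_two p q z (L - 2) d
  rw [Nat.sub_add_cancel hL] at hr
  rw [show L - 2 + 1 = L - 1 by omega] at hrmem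
  have hnot : letter3 p q z L ∉ r ++ t := by
    rw [mem_append]
    rintro (h | h) <;> [have := hrmem _ h; have := ht _ h] <;>
      exact this.elim (letter3_ne hpq hpz hqz (by omega)) (letter3_ne hpq hpz hqz (by omega))
  rw [hr, append_assoc] at h
  exact cost_map_code3_add_lt hpq hpz hqz (by simp)
    (append_singleton_sublist_of_append_cons_sublist h hnot)

end Block

section Copy

variable {α β : Type*} [DecidableEq α] [DecidableEq β] {u : List α} {a b c : α}

theorem false_of_sublist_append_drop_seg3 (hlen : 6 ≤ u.length)
    (hab : a ≠ b) (hac : a ≠ c) (hbc : b ≠ c) (hletters : u.toFinset = {a, b, c})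
    (hlast : u.drop (u.length - 3) = [a, b, c] ∨ u.drop (u.length - 3) = [b, c, a] ∨
      u.drop (u.length - 3) = [c, a, b])
    (hf : f1 u a b c + 5 ≤ f0 u a b c) {L : ℕ} (hL : 2 ≤ L)
    (hW : L ≤ f0 u a b c + 2 * f1 u a b c + 3 * f2 u)
    {p q z : β} (hpq : p ≠ q) (hpz : p ≠ z) (hqz : q ≠ z) {d : ℕ} {pre t : List β}
    (ht : ∀ w ∈ t, w = letter3 p q z (L - 2) ∨ w = letter3 p q z (L - 1))
    {f : α → β} (hinj : ∀ x ∈ u, ∀ y ∈ u, f x = f y → x = y)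
    (hsub : u.map f <+ pre ++ ((seg3 p q z L).drop d ++ t))
    {P R : List α} {y : α} (hu : u = P ++ y :: R) (hprefix : P ++ [y] <+: [a, b, c])
    (hPd : P.length ≤ d) (hy : f y ∉ pre) : False := by
  have hP : P.length < 3 := by simpa using hprefix.length_le
  have hsub' : (y :: R).map f <+ (seg3 p q z L).drop d ++ t :=
    cons_sublist_of_append_cons_sublist (by simpa [hu] using hsub) hy
  have hmaps : ∀ x ∈ u, f x ∈ [p, q, z] := fun x hx =>
    mem_of_sublist_drop_seg3_append ht hsub' _ <| mem_map_of_mem <|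
      mem_of_mem_drop_of_eq_append hu (by omega) (mem_drop_length_sub_three hletters hlast hx)
  have hγinj : ∀ x ∈ [a, b, c], ∀ y ∈ [a, b, c], code3 p q (f x) = code3 p q (f y) → x = y := by
    intro x hx y hy h
    have hx' : x ∈ u := by rw [← mem_toFinset, hletters]; simpa using hx
    have hy' : y ∈ u := by rw [← mem_toFinset, hletters]; simpa using hy
    exact hinj x hx' y hy' (code3_injOn hpq hpz hqz (hmaps x hx') (hmaps y hy') h)
  obtain ⟨w, hwu, hfw⟩ := exists_mem_eq_of_injOn (T := {p, q, z}) hinj (by simpa using hmaps)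
    (by rw [hletters, Finset.card_eq_three.mpr ⟨a, b, c, hab, hac, hbc, rfl⟩]
        exact Finset.card_le_three)
    (letter3 p q z L) (by simpa using letter3_mem p q z L)
  obtain ⟨s, S, hs⟩ := append_of_mem (mem_drop_length_sub_three hletters hlast hwu)
  have hu' : u = (u.take (u.length - 3) ++ s) ++ w :: S := by
    rw [append_assoc, ← hs, take_append_drop]
  obtain ⟨M, rfl⟩ := exists_eq_append_cons_of_length_lt (hu.symm.trans hu') (by simp; omega)
  have hmid : cost ((y :: M ++ [w]).map (code3 p q ∘ f)) + d < L - 2 := by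
    rw [← map_map, map_append, map_singleton, hfw]
    exact cost_add_lt_of_append_cons_sublist (l' := S.map f) hpq hpz hqz hL ht
      (by simpa [← hfw] using hsub')
  have := le_cost_map_middle hab hac hbc hletters hlast hf hW (γ := code3 p q ∘ f)
    (fun x _ => code3_lt _) hγinj hu hprefix (hs ▸ suffix_append s (w :: S))
  omega

end Copy

def penult (s : List ℕ) : ℕ := s.getD (s.length - 2) 0

def ult (s : List ℕ) : ℕ := s.getD (s.length - 1) 0

lemma penult_append_pair (l : List ℕ) (x y : ℕ) : penult (l ++ [x, y]) = x := by
  simp [penult]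

lemma ult_append_pair (l : List ℕ) (x y : ℕ) : ult (l ++ [x, y]) = y := by
  simp [ult]

lemma penult_append_drop_seg3 (s : List ℕ) (p q z : ℕ) {L d : ℕ} (h : d + 2 ≤ L) :
    penult (s ++ (seg3 p q z L).drop d) = letter3 p q z (L - 2) ∧
      ult (s ++ (seg3 p q z L).drop d) = letter3 p q z (L - 1) := by
  obtain ⟨m, rfl⟩ : ∃ m, L = m + 2 := ⟨L - 2, by omega⟩
  rw [seg3_add_two, drop_append_of_le_length (by rw [length_seg3]; omega),
    show m + 2 - 1 = m + 1 by omega, Nat.add_sub_cancel]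
  simp only [← append_assoc, penult_append_pair, ult_append_pair, and_self]

lemma sFam_succ (L : ℕ) {n : ℕ} (hn : 3 ≤ n) :
    sFam L (n + 1) =
      sFam L n ++ (seg3 (penult (sFam L n)) (ult (sFam L n)) (n + 1) L).drop 2 := by
  obtain ⟨k, rfl⟩ : ∃ k, n = k + 3 := ⟨n - 3, by omega⟩
  rfl

lemma mem_sFam_le_and_penult_ne_ult {L : ℕ} (hL : 4 ≤ L) {n : ℕ} (hn : 3 ≤ n) :
    (∀ w ∈ sFam L n, w ≤ n) ∧ penult (sFam L n) ≠ ult (sFam L n) ∧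
      penult (sFam L n) ≤ n ∧ ult (sFam L n) ≤ n := by
  induction n, hn using Nat.le_induction with
  | base =>
    obtain ⟨hp, hu⟩ := penult_append_drop_seg3 [] 1 2 3 (d := 0) (L := L) (by omega)
    simp only [nil_append, drop_zero] at hp hu
    have h3 : ∀ x ∈ [1, 2, 3], x ≤ 3 := by simp
    refine ⟨fun w hw => h3 w (mem_seg3 hw), ?_, hp ▸ h3 _ (letter3_mem 1 2 3 _),
      hu ▸ h3 _ (letter3_mem 1 2 3 _)⟩
    rw [show sFam L 3 = seg3 1 2 3 L from rfl, hp, hu]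
    exact letter3_ne (by decide) (by decide) (by decide) (by omega)
  | succ n hn ih =>
    obtain ⟨hle, hne, hpn, hun⟩ := ih
    obtain ⟨hp, hu⟩ := penult_append_drop_seg3 (sFam L n) (penult (sFam L n)) (ult (sFam L n))
      (n + 1) (d := 2) (L := L) (by omega)
    have hblock : ∀ x ∈ [penult (sFam L n), ult (sFam L n), n + 1], x ≤ n + 1 := by
      simp only [mem_cons, not_mem_nil, or_false]
      omega
    rw [sFam_succ L hn, hp, hu]
    refine ⟨fun w hw => ?_, letter3_ne hne (by omega) (by omega) (by omega),
      hblock _ (letter3_mem _ _ _ _), hblock _ (letter3_mem _ _ _ _)⟩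
    rcases mem_append.mp hw with hw | hw
    · exact (hle w hw).trans n.le_succ
    · exact hblock w (mem_seg3 (mem_of_mem_drop hw))

section Family

variable {α : Type*} [DecidableEq α] {u : List α} {a b c : α}

theorem not_containsCopy_sFam_append (hlen : 6 ≤ u.length)
    (hab : a ≠ b) (hac : a ≠ c) (hbc : b ≠ c) (hletters : u.toFinset = {a, b, c})
    (hfirst : u.take 3 = [a, b, c])
    (hlast : u.drop (u.length - 3) = [a, b, c] ∨ u.drop (u.length - 3) = [b, c, a] ∨
      u.drop (u.length - 3) = [c, a, b])
    (hf : f1 u a b c + 5 ≤ f0 u a b c) {L : ℕ} (hL : 4 ≤ L)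
    (hW : L ≤ f0 u a b c + 2 * f1 u a b c + 3 * f2 u) {n : ℕ} (hn : 3 ≤ n) :
    ∀ t : List ℕ, (∀ w ∈ t, w = penult (sFam L n) ∨ w = ult (sFam L n)) →
      ¬ ContainsCopy (sFam L n ++ t) u := by
  induction n, hn using Nat.le_induction with
  | base =>
    rintro t ht ⟨_, hsub, f, hinj, rfl⟩
    obtain ⟨hp, hu⟩ := penult_append_drop_seg3 [] 1 2 3 (d := 0) (L := L) (by omega)
    simp only [nil_append, drop_zero] at hp hu
    rw [show sFam L 3 = seg3 1 2 3 L from rfl] at ht hsub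
    rw [hp, hu] at ht
    have hua : u = [] ++ a :: u.tail := by
      rw [← take_append_drop 3 u, hfirst]
      rfl
    exact false_of_sublist_append_drop_seg3 hlen hab hac hbc hletters hlast hf (by omega) hW
      (by decide) (by decide) (by decide) ht hinj (by simpa using hsub) hua ⟨[b, c], rfl⟩ le_rfl
      not_mem_nil
  | succ n hn ih =>
    rintro t ht ⟨_, hsub, f, hinj, rfl⟩
    obtain ⟨hle, hne, hpn, hun⟩ := mem_sFam_le_and_penult_ne_ult hL hn
    obtain ⟨hp, hu⟩ := penult_append_drop_seg3 (sFam L n) (penult (sFam L n)) (ult (sFam L n))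
      (n + 1) (d := 2) (L := L) (by omega)
    rw [sFam_succ L hn] at ht hsub
    rw [hp, hu] at ht
    rw [append_assoc] at hsub
    by_cases hnew : ∃ w ∈ u, f w = n + 1
    · obtain ⟨w, hwu, hfw⟩ := hnew
      obtain ⟨P, R, hPR, hprefix⟩ :=
        exists_eq_append_cons_of_take_eq hfirst (mem_of_toFinset_eq hletters hwu)
      exact false_of_sublist_append_drop_seg3 hlen hab hac hbc hletters hlast hf (by omega) hW
        hne (by omega) (by omega) ht hinj hsub hPR hprefix
        (Nat.lt_succ_iff.mp (by simpa using hprefix.length_le)) fun h => by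
          have := hle _ (hfw ▸ h)
          omega
    · push Not at hnew
      refine ih (((seg3 (penult (sFam L n)) (ult (sFam L n)) (n + 1) L).drop 2 ++ t).filter
        (· ≠ n + 1)) (fun w hw => ?_) ⟨u.map f, ?_, f, hinj, rfl⟩
      · rw [mem_filter, decide_eq_true_iff] at hw
        have := mem_of_sublist_drop_seg3_append ht (Sublist.refl _) w hw.1
        simp only [mem_cons, not_mem_nil, or_false] at this
        tauto
      · refine sublist_append_filter _ hsub (forall_mem_map.mpr fun x hx => ?_) fun x hx => ?_
        · exact decide_eq_true (hnew x hx)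
        · exact decide_eq_true (by have := hle x hx; omega)

end Family

end SparseAvoid

theorem stmt12 {α : Type*} [DecidableEq α] (u : List α) (a b c : α)
    (hlen : 6 ≤ u.length)
    (hab : a ≠ b) (hac : a ≠ c) (hbc : b ≠ c)
    (hletters : u.toFinset = {a, b, c})
    (hfirst : u.take 3 = [a, b, c])
    (hlast : u.drop (u.length - 3) = [a, b, c] ∨ u.drop (u.length - 3) = [b, c, a] ∨
      u.drop (u.length - 3) = [c, a, b])
    (hf : f1 u a b c + 5 ≤ f0 u a b c)
    (L : ℕ)
    -- `L` is the length of `s₃(u)`, the longest initial segment of `1,2,3,1,2,3,…`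
    -- avoiding `u`:
    (havoid : ¬ ContainsCopy (seg3 1 2 3 L) u)
    (hmax : ContainsCopy (seg3 1 2 3 (L + 1)) u) :
    ∀ n : ℕ, 3 ≤ n → ¬ ContainsCopy (sFam L n) u := by
  have hL : 5 ≤ L := by
    have := hmax.length_le
    rw [SparseAvoid.length_seg3] at this
    omega
  intro n hn hcopy
  exact SparseAvoid.not_containsCopy_sFam_append hlen hab hac hbc hletters hfirst hlast hf
    (by omega) (SparseAvoid.le_weight_of_not_containsCopy hab hac hbc hletters hfirst havoid) hn
    [] (by simp) (by simpa using hcopy)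
end
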